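/- arXiv:2501.11129 — 7 statements merged into one kernel-verified Lean document; each statement's English description precedes it below -/
import Mathlib

section
/- For every integer w with 0 ≤ w ≤ D, the function C(·,·,w) satisfies the Quadrangle Inequality: for all indices 1 ≤ i ≤ i′ ≤ j ≤ j′ ≤ n, C(i,j,w) + C(i′,j′,w) ≤ C(i,j′,w) + C(i′,j,w). -/
/-!
Induction on `w`. At level `w + 1`, let `y` and `z` be optimal split points of `C(i,j')` and
`C(i',j)`. Splitting `C(i,j)` at `z` and `C(i',j')` at `y` when `z ≤ y`, or `C(i,j)` at `y` and
`C(i',j')` at `z` when `y < z`, bounds the left-hand side by the right-hand side plus the defect of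
a quadrangle inequality: on the left parts at level `w + 1` with a shorter outer interval, or on the
right parts at level `w`. The weight sums exchange exactly. The degenerate case `i' = j` needs
superadditivity `C(i,k) + C(k,j) ≤ C(i,j)`, proved by the same splitting argument together with
monotonicity of `C` in `w`.
-/

open scoped ENNReal NNReal

open Finset

theorem Finset.sum_Icc_add_sum_Icc {α M : Type*} [LinearOrder α] [LocallyFiniteOrder α]
    [AddCommMonoid M] (f : α → M) {a b c d : α} (hab : a ≤ b) (hbc : b ≤ c) (hcd : c ≤ d) :
    ∑ k ∈ Icc a c, f k + ∑ k ∈ Icc b d, f k = ∑ k ∈ Icc a d, f k + ∑ k ∈ Icc b c, f k := by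
  have hunion : Icc a c ∪ Icc b d = Icc a d := by
    rw [← coe_inj, coe_union, coe_Icc, coe_Icc, coe_Icc,
      Set.Icc_union_Icc' hbc (hab.trans (hbc.trans hcd)), min_eq_left hab, max_eq_right hcd]
  have hinter : Icc a c ∩ Icc b d = Icc b c := by
    rw [← coe_inj, coe_inter, coe_Icc, coe_Icc, coe_Icc, Set.Icc_inter_Icc, sup_eq_right.2 hab,
      inf_eq_left.2 hcd]
  rw [← sum_union_inter, hunion, hinter]

noncomputable def weight (p : ℕ → ℝ≥0) (a b : ℕ) : ℝ≥0∞ :=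
  ∑ k ∈ Icc a b, (p k : ℝ≥0∞)

theorem weight_mono (p : ℕ → ℝ≥0) {a a' b b' : ℕ} (ha : a' ≤ a) (hb : b ≤ b') :
    weight p a b ≤ weight p a' b' :=
  sum_le_sum_of_subset (Icc_subset_Icc ha hb)

theorem weight_add_weight (p : ℕ → ℝ≥0) {i i' j j' : ℕ} (hii' : i ≤ i') (hi'j : i' ≤ j)
    (hjj' : j ≤ j') : weight p i j + weight p i' j' = weight p i j' + weight p i' j :=
  sum_Icc_add_sum_Icc _ hii' hi'j hjj'

def QuadrangleIneq (n : ℕ) (f : ℕ → ℕ → ℝ≥0∞) : Prop :=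
  ∀ i i' j j', 1 ≤ i → i ≤ i' → i' ≤ j → j ≤ j' → j' ≤ n → f i j + f i' j' ≤ f i j' + f i' j

structure IsAlphabeticCost (n : ℕ) (p : ℕ → ℝ≥0) (C : ℕ → ℕ → ℕ → ℝ≥0∞) : Prop where
  diag : ∀ i w, 1 ≤ i → i ≤ n → C i i w = 0
  zero : ∀ i j, 1 ≤ i → i < j → j ≤ n → C i j 0 = ⊤
  succ_eq : ∀ i j w, 1 ≤ i → i < j → j ≤ n →
    C i j (w + 1) = weight p i j + ⨅ k ∈ Ioc i j, (C i (k - 1) (w + 1) + C k j w)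

namespace IsAlphabeticCost

variable {n : ℕ} {p : ℕ → ℝ≥0} {C : ℕ → ℕ → ℕ → ℝ≥0∞}

theorem le_split (hC : IsAlphabeticCost n p C) {i j k : ℕ} (w : ℕ) (hi : 1 ≤ i) (hik : i < k)
    (hkj : k ≤ j) (hj : j ≤ n) :
    C i j (w + 1) ≤ weight p i j + (C i (k - 1) (w + 1) + C k j w) := by
  rw [hC.succ_eq i j w hi (hik.trans_le hkj) hj]
  gcongr
  exact iInf₂_le k (mem_Ioc.2 ⟨hik, hkj⟩)

theorem exists_split (hC : IsAlphabeticCost n p C) {i j : ℕ} (w : ℕ) (hi : 1 ≤ i) (hij : i < j)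
    (hj : j ≤ n) :
    ∃ k, i < k ∧ k ≤ j ∧ C i j (w + 1) = weight p i j + (C i (k - 1) (w + 1) + C k j w) := by
  obtain ⟨k, hk, hmin⟩ := exists_mem_eq_inf (Ioc i j) ⟨j, mem_Ioc.2 ⟨hij, le_rfl⟩⟩
    (fun k => C i (k - 1) (w + 1) + C k j w)
  rw [mem_Ioc] at hk
  exact ⟨k, hk.1, hk.2, by rw [hC.succ_eq i j w hi hij hj, ← Finset.inf_eq_iInf, hmin]⟩

theorem apply_succ_le (hC : IsAlphabeticCost n p C) (w : ℕ) {i j : ℕ} (hi : 1 ≤ i) (hij : i ≤ j)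
    (hj : j ≤ n) : C i j (w + 1) ≤ C i j w := by
  induction w generalizing i j with
  | zero =>
    rcases hij.eq_or_lt with rfl | hij
    · rw [hC.diag i 1 hi hj, hC.diag i 0 hi hj]
    · rw [hC.zero i j hi hij hj]
      exact le_top
  | succ w ihw =>
    induction j using Nat.strong_induction_on with
    | _ j ihj =>
    rcases hij.eq_or_lt with rfl | hij
    · rw [hC.diag i (w + 2) hi hj, hC.diag i (w + 1) hi hj]
    rw [hC.succ_eq i j (w + 1) hi hij hj, hC.succ_eq i j w hi hij hj]
    refine add_le_add_right (iInf₂_mono fun k hk => ?_) _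
    rw [mem_Ioc] at hk
    exact add_le_add (ihj (k - 1) (by omega) (by omega) (by omega)) (ihw (by omega) hk.2 hj)

theorem superadditive (hC : IsAlphabeticCost n p C) (w : ℕ) {i k j : ℕ} (hi : 1 ≤ i)
    (hik : i ≤ k) (hkj : k ≤ j) (hj : j ≤ n) : C i k w + C k j w ≤ C i j w := by
  induction w generalizing i k j with
  | zero =>
    rcases hik.eq_or_lt with rfl | hik
    · rw [hC.diag i 0 hi (hkj.trans hj), zero_add]
    rcases hkj.eq_or_lt with rfl | hkj
    · rw [hC.diag k 0 (by omega) hj, add_zero]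
    rw [hC.zero i j hi (hik.trans hkj) hj]
    exact le_top
  | succ w ihw =>
    induction j using Nat.strong_induction_on generalizing k with
    | _ j ihj =>
    rcases hik.eq_or_lt with rfl | hik
    · rw [hC.diag i (w + 1) hi (hkj.trans hj), zero_add]
    rcases hkj.eq_or_lt with rfl | hkj
    · rw [hC.diag k (w + 1) (by omega) hj, add_zero]
    obtain ⟨y, hiy, hyj, hy⟩ := hC.exists_split w hi (hik.trans hkj) hj
    rw [hy]
    rcases le_or_gt y k with hyk | hky
    · calc C i k (w + 1) + C k j (w + 1)
          ≤ weight p i k + (C i (y - 1) (w + 1) + C y k w) + C k j w :=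
            add_le_add (hC.le_split w hi hiy hyk (by omega))
              (hC.apply_succ_le w (by omega) hkj.le hj)
        _ = weight p i k + C i (y - 1) (w + 1) + (C y k w + C k j w) := by ring
        _ ≤ weight p i j + C i (y - 1) (w + 1) + C y j w := by
            gcongr
            · exact weight_mono p le_rfl hkj.le
            · exact ihw (by omega) hyk hkj.le hj
        _ = weight p i j + (C i (y - 1) (w + 1) + C y j w) := by ring
    · calc C i k (w + 1) + C k j (w + 1)
          ≤ C i k (w + 1) + (weight p k j + (C k (y - 1) (w + 1) + C y j w)) := by
            gcongr
            exact hC.le_split w (by omega) hky hyj hj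
        _ = weight p k j + (C i k (w + 1) + C k (y - 1) (w + 1)) + C y j w := by ring
        _ ≤ weight p i j + C i (y - 1) (w + 1) + C y j w := by
            gcongr
            · exact weight_mono p hik.le le_rfl
            · exact ihj (y - 1) (by omega) hik.le (by omega) (by omega)
        _ = weight p i j + (C i (y - 1) (w + 1) + C y j w) := by ring

theorem quadrangle_zero (hC : IsAlphabeticCost n p C) : QuadrangleIneq n (C · · 0) := by
  intro i i' j j' hi hii' hi'j hjj' hj'
  dsimp only
  rcases (hii'.trans (hi'j.trans hjj')).eq_or_lt with hij' | hij'
  · obtain ⟨rfl, rfl, rfl⟩ : i' = i ∧ j = i ∧ j' = i := by omega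
    exact le_rfl
  · simp only [hC.zero i j' hi hij' hj', top_add, le_top]

theorem quadrangle_succ_of_lt (hC : IsAlphabeticCost n p C) {w : ℕ}
    (hw : QuadrangleIneq n (C · · w)) {i i' j j' : ℕ} (hi : 1 ≤ i) (hii' : i < i') (hi'j : i' < j)
    (hjj' : j < j') (hj' : j' ≤ n)
    (ih : ∀ a b, i' ≤ a → a ≤ b → b < j' →
      C i a (w + 1) + C i' b (w + 1) ≤ C i b (w + 1) + C i' a (w + 1)) :
    C i j (w + 1) + C i' j' (w + 1) ≤ C i j' (w + 1) + C i' j (w + 1) := by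
  obtain ⟨y, hiy, hyj', hy⟩ := hC.exists_split w hi (by omega : i < j') hj'
  obtain ⟨z, hi'z, hzj, hz⟩ := hC.exists_split w (by omega) hi'j (by omega)
  have hweight := weight_add_weight p hii'.le hi'j.le hjj'.le
  rw [hy, hz]
  rcases le_or_gt z y with hzy | hyz
  · calc C i j (w + 1) + C i' j' (w + 1)
        ≤ (weight p i j + (C i (z - 1) (w + 1) + C z j w)) +
          (weight p i' j' + (C i' (y - 1) (w + 1) + C y j' w)) :=
          add_le_add (hC.le_split w hi (by omega) hzj (by omega))
            (hC.le_split w (by omega) (by omega) hyj' hj')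
      _ = (weight p i j + weight p i' j') + (C i (z - 1) (w + 1) + C i' (y - 1) (w + 1)) +
          (C z j w + C y j' w) := by ring
      _ ≤ (weight p i j' + weight p i' j) + (C i (y - 1) (w + 1) + C i' (z - 1) (w + 1)) +
          (C z j w + C y j' w) := by
          rw [hweight]
          gcongr _ + ?_ + _
          exact ih (z - 1) (y - 1) (by omega) (by omega) (by omega)
      _ = _ := by ring
  · calc C i j (w + 1) + C i' j' (w + 1)
        ≤ (weight p i j + (C i (y - 1) (w + 1) + C y j w)) +
          (weight p i' j' + (C i' (z - 1) (w + 1) + C z j' w)) :=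
          add_le_add (hC.le_split w hi hiy (by omega) (by omega))
            (hC.le_split w (by omega) hi'z (by omega) hj')
      _ = (weight p i j + weight p i' j') + (C y j w + C z j' w) +
          (C i (y - 1) (w + 1) + C i' (z - 1) (w + 1)) := by ring
      _ ≤ (weight p i j' + weight p i' j) + (C y j' w + C z j w) +
          (C i (y - 1) (w + 1) + C i' (z - 1) (w + 1)) := by
          rw [hweight]
          gcongr _ + ?_ + _
          exact hw y z j j' (by omega) hyz.le hzj hjj'.le hj'
      _ = _ := by ring

theorem quadrangle_succ (hC : IsAlphabeticCost n p C) {w : ℕ} (hw : QuadrangleIneq n (C · · w)) :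
    QuadrangleIneq n (C · · (w + 1)) := by
  intro i i' j j' hi hii' hi'j hjj' hj'
  dsimp only
  induction j' using Nat.strong_induction_on generalizing j with
  | _ j' ih =>
  rcases hii'.eq_or_lt with rfl | hii'
  · exact (add_comm _ _).le
  rcases hjj'.eq_or_lt with rfl | hjj'
  · exact le_rfl
  rcases hi'j.eq_or_lt with rfl | hi'j
  · rw [hC.diag i' (w + 1) (by omega) (by omega), add_zero]
    exact hC.superadditive (w + 1) hi hii'.le hjj'.le hj'
  exact hC.quadrangle_succ_of_lt hw hi hii' hi'j hjj' hj'
    fun a b ha hab hb => ih b hb a ha hab (by omega)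

end IsAlphabeticCost

/-- **Corollary 1.** For every `0 ≤ w ≤ D`, the cost function `C(·,·,w)` of optimal
alphabetic codes with at most `w` ones per codeword satisfies the Quadrangle Inequality:
for all `1 ≤ i ≤ i' ≤ j ≤ j' ≤ n`,
`C(i,j,w) + C(i',j',w) ≤ C(i,j',w) + C(i',j,w)`.
Here `C(i,i,w) = 0`, `C(i,j,0) = ∞` for `i < j`, and for `i < j`, `w ≥ 1`,
`C(i,j,w) = (p_i + ⋯ + p_j) + min_{i < k ≤ j} (C(i,k-1,w) + C(k,j,w-1))`. -/
theorem quadrangle_inequality_for_C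
    (n D : ℕ) (p : ℕ → ℝ≥0)
    (C : ℕ → ℕ → ℕ → ℝ≥0∞)
    (hdiag : ∀ i w : ℕ, 1 ≤ i → i ≤ n → C i i w = 0)
    (hzero : ∀ i j : ℕ, 1 ≤ i → i < j → j ≤ n → C i j 0 = ⊤)
    (hrec : ∀ i j w : ℕ, 1 ≤ i → i < j → j ≤ n → 1 ≤ w →
      C i j w = (∑ k ∈ Finset.Icc i j, (p k : ℝ≥0∞)) +
        ⨅ k ∈ Finset.Ioc i j, (C i (k - 1) w + C k j (w - 1))) :
    ∀ w : ℕ, w ≤ D → ∀ i i' j j' : ℕ, 1 ≤ i → i ≤ i' → i' ≤ j → j ≤ j' → j' ≤ n →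
      C i j w + C i' j' w ≤ C i j' w + C i' j w := by
  have hC : IsAlphabeticCost n p C :=
    ⟨hdiag, hzero, fun i j w hi hij hj => hrec i j (w + 1) hi hij hj w.succ_pos⟩
  suffices ∀ w, QuadrangleIneq n (C · · w) from fun w _ => this w
  intro w
  induction w with
  | zero => exact hC.quadrangle_zero
  | succ w ih => exact hC.quadrangle_succ ih
end

section
/- For every integer w ≥ 1 and all indices 1 ≤ i < k ≤ k′ ≤ j ≤ n−1, it holds that C_k(i,j,w) + C_{k′}(i,j+1,w) ≤ C_k(i,j+1,w) + C_{k′}(i,j,w), where C_k(i,j,w) = c(i,j) + C(i,k−1,w) + C(k,j,w−1). -/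
open scoped ENNReal NNReal BigOperators

/-!
The inequality is the quadrangle inequality
`C(k,j,w-1) + C(k',j+1,w-1) ≤ C(k,j+1,w-1) + C(k',j,w-1)` with the same terms added on both
sides. That inequality is Yao's: for `i ≤ i' ≤ j ≤ j'`, by induction on `(w, j' - i)`, take
optimal splits `y` of `[i, j']` and `z` of `[i', j]`, use `min y z` for `[i, j]` and `max y z`
for `[i', j']`, and close with the quadrangle inequality at level `w` (if `z ≤ y`) or `w - 1`
(if `y ≤ z`), using that interval sums satisfy it with equality. The degenerate case `i' = j` is
superadditivity `C(i,j,w) + C(j,j',w) ≤ C(i,j',w)`, proved the same way from the monotonicity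
of `C` in `w`.
-/

structure IsSplitCostTable (n : ℕ) (c : ℕ → ℕ → ℝ≥0∞) (C : ℕ → ℕ → ℕ → ℝ≥0∞) : Prop where
  diag : ∀ i w : ℕ, 1 ≤ i → i ≤ n → C i i w = 0
  zero_width : ∀ i j : ℕ, 1 ≤ i → i < j → j ≤ n → C i j 0 = ⊤
  eq_add_iInf : ∀ i j w : ℕ, 1 ≤ i → i < j → j ≤ n → 1 ≤ w →
    C i j w = c i j + ⨅ k ∈ Finset.Ioc i j, (C i (k - 1) w + C k j (w - 1))

theorem Finset.sum_Icc_add_sum_Icc_comm {M : Type*} [AddCommMonoid M] (f : ℕ → M)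
    {i i' j j' : ℕ} (hii' : i ≤ i') (hi'j : i' ≤ j + 1) (hjj' : j ≤ j') :
    ∑ m ∈ Icc i j, f m + ∑ m ∈ Icc i' j', f m = ∑ m ∈ Icc i j', f m + ∑ m ∈ Icc i' j, f m := by
  simp only [← Ico_add_one_right_eq_Icc]
  rw [← sum_Ico_consecutive f hii' hi'j, ← sum_Ico_consecutive f hii' (by omega : i' ≤ j' + 1)]
  abel

theorem add_le_add_of_exchange {α : Type*} [AddCommMonoid α] [PartialOrder α]
    [IsOrderedAddMonoid α] {x y s t s' t' a₁ a₂ a₁' a₂' b₁ b₂ b₁' b₂' : α}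
    (hx : x ≤ s + (a₁ + b₁)) (hy : y ≤ t + (a₂ + b₂)) (hst : s + t ≤ s' + t')
    (ha : a₁ + a₂ ≤ a₁' + a₂') (hb : b₁ + b₂ ≤ b₁' + b₂') :
    x + y ≤ (s' + (a₁' + b₁')) + (t' + (a₂' + b₂')) :=
  calc x + y ≤ (s + t) + (a₁ + a₂) + (b₁ + b₂) := (add_le_add hx hy).trans_eq (by abel)
    _ ≤ (s' + t') + (a₁' + a₂') + (b₁' + b₂') := by gcongr
    _ = (s' + (a₁' + b₁')) + (t' + (a₂' + b₂')) := by abel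

namespace IsSplitCostTable

variable {n : ℕ} {c : ℕ → ℕ → ℝ≥0∞} {C : ℕ → ℕ → ℕ → ℝ≥0∞}

theorem le_add_of_mem (hC : IsSplitCostTable n c C) {i j w k : ℕ} (hi : 1 ≤ i) (hj : j ≤ n)
    (hw : 1 ≤ w) (hik : i < k) (hkj : k ≤ j) :
    C i j w ≤ c i j + (C i (k - 1) w + C k j (w - 1)) := by
  rw [hC.eq_add_iInf i j w hi (hik.trans_le hkj) hj hw]
  exact add_le_add_right (iInf₂_le k (Finset.mem_Ioc.mpr ⟨hik, hkj⟩)) _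

theorem exists_eq_add (hC : IsSplitCostTable n c C) {i j w : ℕ} (hi : 1 ≤ i) (hij : i < j)
    (hj : j ≤ n) (hw : 1 ≤ w) :
    ∃ k, i < k ∧ k ≤ j ∧ C i j w = c i j + (C i (k - 1) w + C k j (w - 1)) := by
  obtain ⟨k, hk, he⟩ := Finset.exists_mem_eq_inf (Finset.Ioc i j)
    ⟨j, Finset.mem_Ioc.mpr ⟨hij, le_rfl⟩⟩ (fun k => C i (k - 1) w + C k j (w - 1))
  rw [Finset.mem_Ioc] at hk
  refine ⟨k, hk.1, hk.2, ?_⟩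
  rw [hC.eq_add_iInf i j w hi hij hj hw, ← Finset.inf_eq_iInf, he]

theorem succ_le (hC : IsSplitCostTable n c C) {i j : ℕ} (hi : 1 ≤ i) (hij : i ≤ j)
    (hj : j ≤ n) (w : ℕ) : C i j (w + 1) ≤ C i j w := by
  rcases hij.eq_or_lt with rfl | hij
  · rw [hC.diag i (w + 1) hi hj, hC.diag i w hi hj]
  rcases Nat.eq_zero_or_pos w with rfl | hw
  · rw [hC.zero_width i j hi hij hj]
    exact le_top
  rw [hC.eq_add_iInf i j (w + 1) hi hij hj (by omega), hC.eq_add_iInf i j w hi hij hj hw]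
  refine add_le_add_right (iInf₂_mono fun k hk => add_le_add ?_ ?_) _ <;>
    obtain ⟨hik, hkj⟩ := Finset.mem_Ioc.mp hk
  · exact hC.succ_le hi (by omega) (by omega) w
  · simpa [Nat.sub_add_cancel hw] using hC.succ_le (by omega) hkj hj (w - 1)
termination_by (w, j - i)

theorem antitone (hC : IsSplitCostTable n c C) {i j : ℕ} (hi : 1 ≤ i) (hij : i ≤ j)
    (hj : j ≤ n) : Antitone (C i j) :=
  antitone_nat_of_succ_le (hC.succ_le hi hij hj)

theorem superadditive (hC : IsSplitCostTable n c C)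
    (hc : ∀ ⦃i i' j j'⦄, i' ≤ i → j ≤ j' → c i j ≤ c i' j') {w i j j' : ℕ} (hi : 1 ≤ i)
    (hij : i ≤ j) (hjj' : j ≤ j') (hj' : j' ≤ n) : C i j w + C j j' w ≤ C i j' w := by
  rcases hij.eq_or_lt with rfl | hij
  · rw [hC.diag i w hi (hjj'.trans hj'), zero_add]
  rcases hjj'.eq_or_lt with rfl | hjj'
  · rw [hC.diag j w (by omega) hj', add_zero]
  rcases Nat.eq_zero_or_pos w with rfl | hw
  · rw [hC.zero_width i j' hi (hij.trans hjj') hj']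
    exact le_top
  obtain ⟨y, hiy, hyj', hy⟩ := hC.exists_eq_add hi (hij.trans hjj') hj' hw
  rw [hy]
  rcases le_or_gt y j with hyj | hjy
  · have hleft := hC.le_add_of_mem hi (by omega) hw hiy hyj
    have hright := hC.antitone (by omega) hjj'.le hj' (Nat.sub_le w 1)
    have htail : C y j (w - 1) + C j j' (w - 1) ≤ C y j' (w - 1) :=
      hC.superadditive hc (by omega) hyj hjj'.le hj'
    have hcost : c i j ≤ c i j' := hc le_rfl hjj'.le
    calc C i j w + C j j' w
        ≤ (c i j + (C i (y - 1) w + C y j (w - 1))) + C j j' (w - 1) := add_le_add hleft hright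
      _ = c i j + (C i (y - 1) w + (C y j (w - 1) + C j j' (w - 1))) := by ring
      _ ≤ c i j' + (C i (y - 1) w + C y j' (w - 1)) := by gcongr
  · have hright := hC.le_add_of_mem (by omega) hj' hw hjy hyj'
    have hhead : C i j w + C j (y - 1) w ≤ C i (y - 1) w :=
      hC.superadditive hc hi hij.le (by omega) (by omega)
    have hcost : c j j' ≤ c i j' := hc hij.le le_rfl
    calc C i j w + C j j' w
        ≤ C i j w + (c j j' + (C j (y - 1) w + C y j' (w - 1))) := add_le_add le_rfl hright
      _ = c j j' + ((C i j w + C j (y - 1) w) + C y j' (w - 1)) := by ring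
      _ ≤ c i j' + (C i (y - 1) w + C y j' (w - 1)) := by gcongr
termination_by (w, j' - i)

theorem quadrangle (hC : IsSplitCostTable n c C)
    (hc : ∀ ⦃i i' j j'⦄, i' ≤ i → j ≤ j' → c i j ≤ c i' j')
    (hcq : ∀ ⦃i i' j j'⦄, i ≤ i' → i' ≤ j → j ≤ j' → c i j + c i' j' ≤ c i j' + c i' j)
    {w i i' j j' : ℕ} (hi : 1 ≤ i) (hii' : i ≤ i') (hi'j : i' ≤ j) (hjj' : j ≤ j')
    (hj' : j' ≤ n) : C i j w + C i' j' w ≤ C i j' w + C i' j w := by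
  rcases hii'.eq_or_lt with rfl | hii'
  · exact (add_comm _ _).le
  rcases hjj'.eq_or_lt with rfl | hjj'
  · exact le_rfl
  rcases hi'j.eq_or_lt with rfl | hi'j
  · rw [hC.diag i' w (by omega) (by omega), add_zero]
    exact hC.superadditive hc hi hii'.le hjj'.le hj'
  rcases Nat.eq_zero_or_pos w with rfl | hw
  · rw [hC.zero_width i j' hi (by omega) hj', top_add]
    exact le_top
  obtain ⟨y, hiy, hyj', hy⟩ := hC.exists_eq_add hi (by omega) hj' hw
  obtain ⟨z, hi'z, hzj, hz⟩ := hC.exists_eq_add (by omega) hi'j (by omega) hw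
  rw [hy, hz]
  rcases le_total z y with hzy | hyz
  · exact add_le_add_of_exchange (hC.le_add_of_mem hi (by omega) hw (by omega) hzj)
      (hC.le_add_of_mem (by omega) hj' hw (by omega) hyj') (hcq hii'.le hi'j.le hjj'.le)
      (hC.quadrangle hc hcq hi hii'.le (by omega) (by omega) (by omega)) (add_comm _ _).le
  · exact add_le_add_of_exchange (hC.le_add_of_mem hi (by omega) hw hiy (by omega))
      (hC.le_add_of_mem (by omega) hj' hw hi'z (by omega)) (hcq hii'.le hi'j.le hjj'.le) le_rfl
      (hC.quadrangle hc hcq (by omega) hyz hzj hjj'.le hj')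
termination_by (w, j' - i)

end IsSplitCostTable

/-- **Key inequality (eq. (17) in the paper).** For every `w ≥ 1` and all
`1 ≤ i < k ≤ k' ≤ j ≤ n - 1`, it holds that
`C_k(i,j,w) + C_{k'}(i,j+1,w) ≤ C_k(i,j+1,w) + C_{k'}(i,j,w)`,
where `C_k(i,j,w) = c(i,j) + C(i,k-1,w) + C(k,j,w-1)` and `c(i,j) = p_i + ⋯ + p_j`.
Here `C(i,i,w) = 0`, `C(i,j,0) = ∞` for `i < j`, and for `i < j`, `w ≥ 1`,
`C(i,j,w) = c(i,j) + min_{i < k ≤ j} (C(i,k-1,w) + C(k,j,w-1))`. -/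
theorem split_cost_quadrangle
    (n : ℕ) (p : ℕ → ℝ≥0)
    (C : ℕ → ℕ → ℕ → ℝ≥0∞)
    (hdiag : ∀ i w : ℕ, 1 ≤ i → i ≤ n → C i i w = 0)
    (hzero : ∀ i j : ℕ, 1 ≤ i → i < j → j ≤ n → C i j 0 = ⊤)
    (hrec : ∀ i j w : ℕ, 1 ≤ i → i < j → j ≤ n → 1 ≤ w →
      C i j w = (∑ k ∈ Finset.Icc i j, (p k : ℝ≥0∞)) +
        ⨅ k ∈ Finset.Ioc i j, (C i (k - 1) w + C k j (w - 1))) :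
    ∀ w : ℕ, 1 ≤ w → ∀ i k k' j : ℕ, 1 ≤ i → i < k → k ≤ k' → k' ≤ j → j + 1 ≤ n →
      (((∑ m ∈ Finset.Icc i j, (p m : ℝ≥0∞)) + C i (k - 1) w + C k j (w - 1)) +
       ((∑ m ∈ Finset.Icc i (j + 1), (p m : ℝ≥0∞)) + C i (k' - 1) w + C k' (j + 1) (w - 1)))
      ≤
      (((∑ m ∈ Finset.Icc i (j + 1), (p m : ℝ≥0∞)) + C i (k - 1) w + C k (j + 1) (w - 1)) +
       ((∑ m ∈ Finset.Icc i j, (p m : ℝ≥0∞)) + C i (k' - 1) w + C k' j (w - 1))) := by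
  intro w _ i k k' j hi hik hkk' hk'j hjn
  have hC : IsSplitCostTable n (fun i j => ∑ m ∈ Finset.Icc i j, (p m : ℝ≥0∞)) C :=
    ⟨hdiag, hzero, hrec⟩
  have hq : C k j (w - 1) + C k' (j + 1) (w - 1) ≤ C k (j + 1) (w - 1) + C k' j (w - 1) :=
    hC.quadrangle (fun _ _ _ _ hi hj => Finset.sum_le_sum_of_subset (Finset.Icc_subset_Icc hi hj))
      (fun _ _ _ _ hii' hi'j hjj' => (Finset.sum_Icc_add_sum_Icc_comm _ hii' (by omega) hjj').le)
      (by omega) hkk' hk'j (by omega) hjn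
  calc _ = ((∑ m ∈ Finset.Icc i j, (p m : ℝ≥0∞)) + (∑ m ∈ Finset.Icc i (j + 1), (p m : ℝ≥0∞)) +
          C i (k - 1) w + C i (k' - 1) w) + (C k j (w - 1) + C k' (j + 1) (w - 1)) := by ring
    _ ≤ _ + (C k (j + 1) (w - 1) + C k' j (w - 1)) := by gcongr
    _ = _ := by ring
end

section
/- The function OPT satisfies the dynamic-programming recurrence: OPT(i,i,w) = 0 for all w ≥ 0; OPT(i,j,0) = ∞ for i < j; and for all 1 ≤ i < j ≤ n and w ≥ 1, OPT(i,j,w) = (p_i + ⋯ + p_j) + min_{i<k≤j} ( OPT(i,k−1,w) + OPT(k,j,w−1) ). -/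
open scoped ENNReal NNReal BigOperators

/-- `OPT p i j w` is the infimum, over all alphabetic prefix codes `c` on the symbols
`{i,…,j}` in which every codeword contains at most `w` ones, of the average length
`∑_{k=i}^{j} p_k · |c k|` (`= ∞` when no such code exists). A code is a prefix code if
no codeword is a prefix of another, and it is alphabetic if it is strictly
order-preserving for the lexicographic order on binary strings (with `0 < 1`). -/
noncomputable def OPT (p : ℕ → ℝ≥0) (i j w : ℕ) : ℝ≥0∞ :=
  ⨅ (c : ℕ → List Bool)
    (_ : ∀ k ∈ Finset.Icc i j, ∀ l ∈ Finset.Icc i j, k ≠ l → ¬ (c k <+: c l))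
    (_ : ∀ k ∈ Finset.Icc i j, ∀ l ∈ Finset.Icc i j, k < l → List.Lex (· < ·) (c k) (c l))
    (_ : ∀ k ∈ Finset.Icc i j, (c k).count true ≤ w),
    ∑ k ∈ Finset.Icc i j, (p k : ℝ≥0∞) * ((c k).length : ℝ≥0∞)

/-!
An alphabetic prefix code on `{i,…,j}` with `i < j` has no empty codeword, and since it is
order-preserving, the first bits of its codewords increase weakly from `i` to `j`. If they are
all equal, deleting the first bit gives a code satisfying the same constraints that costs
`p_i + ⋯ + p_j` less, so induction on the length of the codeword of `i` reduces to the other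
case: exactly the words of some `k,…,j` begin with `1`. Deleting the first bit then splits the code into a code on
`{i,…,k-1}` with at most `w` ones per word and one on `{k,…,j}` with at most `w-1`, each word
one bit shorter, and prefixing `0` resp. `1` reverses this. With `w = 0` every codeword is a
string of `0`s, and of two such strings the lexicographically smaller one is a prefix of the
other.
-/

open Finset

structure IsAlphabeticCode (s : Finset ℕ) (w : ℕ) (c : ℕ → List Bool) : Prop where
  not_prefix : ∀ k ∈ s, ∀ l ∈ s, k ≠ l → ¬ c k <+: c l
  lex : ∀ k ∈ s, ∀ l ∈ s, k < l → List.Lex (· < ·) (c k) (c l)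
  count_true_le : ∀ k ∈ s, (c k).count true ≤ w

noncomputable def weightedLength (p : ℕ → ℝ≥0) (s : Finset ℕ) (c : ℕ → List Bool) : ℝ≥0∞ :=
  ∑ k ∈ s, (p k : ℝ≥0∞) * (c k).length

theorem List.count_true_cons (b : Bool) (l : List Bool) :
    (b :: l).count true = l.count true + b.toNat := by
  cases b <;> simp

theorem List.Lex.head_le {α : Type*} [Preorder α] {a b : α} {l m : List α}
    (h : List.Lex (· < ·) (a :: l) (b :: m)) : a ≤ b := by
  cases h with
  | cons => exact le_rfl
  | rel h => exact h.le

theorem List.Lex.prefix_of_count_true_eq_zero {l m : List Bool} (h : List.Lex (· < ·) l m)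
    (hl : l.count true = 0) (hm : m.count true = 0) : l <+: m := by
  induction h with
  | nil => exact List.nil_prefix
  | @rel a _ b _ h =>
    obtain ⟨-, rfl⟩ := Bool.lt_iff.mp h
    simp at hm
  | cons _ ih =>
    simp only [List.count_true_cons] at hl hm
    exact List.cons_prefix_cons.mpr ⟨rfl, ih (by omega) (by omega)⟩

theorem Finset.Icc_eq_Icc_sub_one_union_Icc {i j k : ℕ} (hik : i < k) (hkj : k ≤ j) :
    Icc i j = Icc i (k - 1) ∪ Icc k j := by
  ext m
  simp only [mem_union, mem_Icc]
  omega

theorem Finset.disjoint_Icc_sub_one_Icc {i k : ℕ} (hik : i < k) (j : ℕ) :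
    Disjoint (Icc i (k - 1)) (Icc k j) := by
  rw [disjoint_left]
  intro m hm hm'
  simp only [mem_Icc] at hm hm'
  omega

theorem exists_eq_decide_le_of_monotoneOn {f : ℕ → Bool} {i j : ℕ} (hij : i ≤ j)
    (hf : MonotoneOn f (Icc i j : Set ℕ)) (hi : f i = false) (hj : f j = true) :
    ∃ k ∈ Ioc i j, ∀ m ∈ Icc i j, f m = decide (k ≤ m) := by
  have hP : ∃ m, m ∈ Icc i j ∧ f m = true := ⟨j, right_mem_Icc.mpr hij, hj⟩
  have hmin : ∀ m < Nat.find hP, ¬ (m ∈ Icc i j ∧ f m = true) := fun m => Nat.find_min hP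
  obtain ⟨hk, hfk⟩ := Nat.find_spec hP
  generalize Nat.find hP = k at hk hfk hmin
  have hik : i ≠ k := by rintro rfl; rw [hi] at hfk; cases hfk
  refine ⟨k, ?_, fun m hm => ?_⟩
  · simp only [mem_Icc, mem_Ioc] at hk ⊢
    omega
  · by_cases hkm : k ≤ m
    · rw [decide_eq_true hkm]
      exact top_le_iff.mp (hfk.symm.trans_le (hf hk hm hkm))
    · simpa [hkm] using fun h => hmin m (not_le.mp hkm) ⟨hm, h⟩

namespace IsAlphabeticCode

variable {s t : Finset ℕ} {w w' : ℕ} {c c' : ℕ → List Bool}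

theorem mono (hc : IsAlphabeticCode t w c) (hst : s ⊆ t) (hw : w ≤ w') :
    IsAlphabeticCode s w' c where
  not_prefix k hk l hl := hc.not_prefix k (hst hk) l (hst hl)
  lex k hk l hl := hc.lex k (hst hk) l (hst hl)
  count_true_le k hk := (hc.count_true_le k (hst hk)).trans hw

theorem congr (hc : IsAlphabeticCode s w c) (h : Set.EqOn c c' s) : IsAlphabeticCode s w c' where
  not_prefix k hk l hl := by rw [← h hk, ← h hl]; exact hc.not_prefix k hk l hl
  lex k hk l hl := by rw [← h hk, ← h hl]; exact hc.lex k hk l hl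
  count_true_le k hk := h hk ▸ hc.count_true_le k hk

theorem ne_nil (hc : IsAlphabeticCode s w c) {k l : ℕ} (hk : k ∈ s) (hl : l ∈ s) (hkl : k ≠ l) :
    c k ≠ [] :=
  fun h => hc.not_prefix k hk l hl hkl (h ▸ List.nil_prefix)

theorem monotoneOn_head! (hc : IsAlphabeticCode s w c) (hne : ∀ k ∈ s, c k ≠ []) :
    MonotoneOn (fun k => (c k).head!) s := by
  intro a ha b hb hab
  rcases hab.eq_or_lt with rfl | hlt
  · exact le_rfl
  have hlex := hc.lex a ha b hb hlt
  rw [← List.cons_head!_tail (hne a ha), ← List.cons_head!_tail (hne b hb)] at hlex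
  exact hlex.head_le

theorem subsingleton_of_weight_zero (hc : IsAlphabeticCode s 0 c) : (s : Set ℕ).Subsingleton := by
  have hlt : ∀ k ∈ s, ∀ l ∈ s, ¬ k < l := fun k hk l hl hkl =>
    hc.not_prefix k hk l hl hkl.ne <| (hc.lex k hk l hl hkl).prefix_of_count_true_eq_zero
      (Nat.le_zero.mp (hc.count_true_le k hk)) (Nat.le_zero.mp (hc.count_true_le l hl))
  intro k hk l hl
  by_contra hkl
  rcases Nat.lt_or_gt_of_ne hkl with h | h
  exacts [hlt k hk l hl h, hlt l hl k hk h]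

theorem union (hs : IsAlphabeticCode s w c) (ht : IsAlphabeticCode t w c)
    (hst : ∀ a ∈ s, ∀ b ∈ t, a < b) (hs0 : ∀ a ∈ s, (c a).head? = some false)
    (ht1 : ∀ b ∈ t, (c b).head? = some true) : IsAlphabeticCode (s ∪ t) w c := by
  have cross : ∀ a ∈ s, ∀ b ∈ t,
      ¬ c a <+: c b ∧ ¬ c b <+: c a ∧ List.Lex (· < ·) (c a) (c b) := by
    intro a ha b hb
    obtain ⟨x, hx⟩ := List.head?_eq_some_iff.mp (hs0 a ha)
    obtain ⟨y, hy⟩ := List.head?_eq_some_iff.mp (ht1 b hb)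
    rw [hx, hy]
    exact ⟨by simp, by simp, List.Lex.rel (by decide)⟩
  refine ⟨fun k hk l hl hkl => ?_, fun k hk l hl hkl => ?_, fun k hk => ?_⟩
  · rcases mem_union.mp hk with hk | hk <;> rcases mem_union.mp hl with hl | hl
    exacts [hs.not_prefix k hk l hl hkl, (cross k hk l hl).1, (cross l hl k hk).2.1,
      ht.not_prefix k hk l hl hkl]
  · rcases mem_union.mp hk with hk | hk <;> rcases mem_union.mp hl with hl | hl
    exacts [hs.lex k hk l hl hkl, (cross k hk l hl).2.2, absurd hkl (hst l hl k hk).asymm,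
      ht.lex k hk l hl hkl]
  · rcases mem_union.mp hk with hk | hk
    exacts [hs.count_true_le k hk, ht.count_true_le k hk]

end IsAlphabeticCode

theorem isAlphabeticCode_cons_iff {s : Finset ℕ} {w : ℕ} (b : Bool) {d : ℕ → List Bool} :
    IsAlphabeticCode s (w + b.toNat) (fun k => b :: d k) ↔ IsAlphabeticCode s w d := by
  constructor
  · intro h
    exact ⟨fun k hk l hl hkl hp =>
        h.not_prefix k hk l hl hkl (List.cons_prefix_cons.mpr ⟨rfl, hp⟩),
      fun k hk l hl hkl => List.lex_cons_iff.mp (h.lex k hk l hl hkl),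
      fun k hk => by simpa [List.count_true_cons] using h.count_true_le k hk⟩
  · intro h
    exact ⟨fun k hk l hl hkl hp => h.not_prefix k hk l hl hkl (List.cons_prefix_cons.mp hp).2,
      fun k hk l hl hkl => List.lex_cons_iff.mpr (h.lex k hk l hl hkl),
      fun k hk => by simpa [List.count_true_cons] using h.count_true_le k hk⟩

theorem isAlphabeticCode_Icc_iff {i j k w : ℕ} {d : ℕ → List Bool} (hik : i < k) (hkj : k ≤ j)
    (hw : 1 ≤ w) :
    IsAlphabeticCode (Icc i j) w (fun m => decide (k ≤ m) :: d m) ↔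
      IsAlphabeticCode (Icc i (k - 1)) w d ∧ IsAlphabeticCode (Icc k j) (w - 1) d := by
  have hL : Set.EqOn (fun m => decide (k ≤ m) :: d m) (fun m => false :: d m) (Icc i (k - 1)) :=
    fun m hm => by simp only [coe_Icc, Set.mem_Icc] at hm; simp; omega
  have hR : Set.EqOn (fun m => decide (k ≤ m) :: d m) (fun m => true :: d m) (Icc k j) :=
    fun m hm => by simp only [coe_Icc, Set.mem_Icc] at hm; simp; omega
  have hwR : w - 1 + true.toNat = w := by rw [Bool.toNat_true]; omega
  constructor
  · intro h
    refine ⟨(isAlphabeticCode_cons_iff false).mp ?_,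
      (isAlphabeticCode_cons_iff true).mp ?_⟩
    · exact (h.mono (Icc_subset_Icc le_rfl (by omega)) (by simp)).congr hL
    · rw [hwR]
      exact (h.mono (Icc_subset_Icc hik.le le_rfl) le_rfl).congr hR
  · rintro ⟨hdL, hdR⟩
    rw [Icc_eq_Icc_sub_one_union_Icc hik hkj]
    refine IsAlphabeticCode.union ?_ ?_ ?_ ?_ ?_
    · exact ((isAlphabeticCode_cons_iff false).mpr hdL).congr hL.symm
    · have hdR' := (isAlphabeticCode_cons_iff true).mpr hdR
      rw [hwR] at hdR'
      exact hdR'.congr hR.symm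
    · intro a ha b hb
      simp only [mem_Icc] at ha hb
      omega
    · intro a ha
      simp only [mem_Icc] at ha
      simp only [List.head?_cons, Option.some.injEq, decide_eq_false_iff_not]
      omega
    · intro b hb
      simp only [mem_Icc] at hb
      simp only [List.head?_cons, Option.some.injEq, decide_eq_true_eq]
      omega

theorem IsAlphabeticCode.eqOn_cons_tail {i j w : ℕ} {c : ℕ → List Bool}
    (hc : IsAlphabeticCode (Icc i j) w c) (hij : i < j) :
    (∃ b, Set.EqOn c (fun m => b :: (c m).tail) (Icc i j)) ∨
      ∃ k ∈ Ioc i j, Set.EqOn c (fun m => decide (k ≤ m) :: (c m).tail) (Icc i j) := by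
  have hi : i ∈ Icc i j := left_mem_Icc.mpr hij.le
  have hj : j ∈ Icc i j := right_mem_Icc.mpr hij.le
  have hne : ∀ m ∈ Icc i j, c m ≠ [] := fun m hm =>
    if hmi : m = i then hc.ne_nil hm hj (hmi ▸ hij.ne) else hc.ne_nil hm hi hmi
  have hcons : ∀ m ∈ Icc i j, c m = (c m).head! :: (c m).tail :=
    fun m hm => (List.cons_head!_tail (hne m hm)).symm
  have hmono := hc.monotoneOn_head! hne
  by_cases hsame : (c i).head! = (c j).head!
  · refine .inl ⟨(c i).head!, fun m hm => (hcons m hm).trans ?_⟩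
    have hle : (c m).head! ≤ (c i).head! := hsame ▸ hmono hm hj (mem_Icc.mp hm).2
    rw [le_antisymm hle (hmono hi hm (mem_Icc.mp hm).1)]
  · have hle : (c i).head! ≤ (c j).head! := hmono hi hj hij.le
    have hheads : (c i).head! = false ∧ (c j).head! = true := by
      revert hle hsame; cases (c i).head! <;> cases (c j).head! <;> decide
    obtain ⟨k, hk, hkm⟩ :=
      exists_eq_decide_le_of_monotoneOn hij.le (by simpa using hmono) hheads.1 hheads.2
    exact .inr ⟨k, hk, fun m hm => (hcons m hm).trans (by rw [hkm m hm])⟩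

section weightedLength

variable (p : ℕ → ℝ≥0) {s t : Finset ℕ} {c c' : ℕ → List Bool}

theorem weightedLength_cons (b : ℕ → Bool) (d : ℕ → List Bool) :
    weightedLength p s (fun k => b k :: d k) =
      ∑ k ∈ s, (p k : ℝ≥0∞) + weightedLength p s d := by
  simp only [weightedLength, List.length_cons, Nat.cast_add, Nat.cast_one, mul_add, mul_one,
    sum_add_distrib, add_comm]

theorem weightedLength_union (h : Disjoint s t) :
    weightedLength p (s ∪ t) c = weightedLength p s c + weightedLength p t c :=
  sum_union h

theorem weightedLength_congr (h : Set.EqOn c c' s) :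
    weightedLength p s c = weightedLength p s c' :=
  sum_congr rfl fun k hk => by rw [h hk]

theorem weightedLength_decide_cons {i j k : ℕ} (hik : i < k) (hkj : k ≤ j) (d : ℕ → List Bool) :
    weightedLength p (Icc i j) (fun m => decide (k ≤ m) :: d m) =
      ∑ m ∈ Icc i j, (p m : ℝ≥0∞) +
        (weightedLength p (Icc i (k - 1)) d + weightedLength p (Icc k j) d) := by
  rw [weightedLength_cons, Icc_eq_Icc_sub_one_union_Icc hik hkj,
    weightedLength_union p (disjoint_Icc_sub_one_Icc hik j)]

end weightedLength

theorem OPT_eq_iInf (p : ℕ → ℝ≥0) (i j w : ℕ) :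
    OPT p i j w = ⨅ (c) (_ : IsAlphabeticCode (Icc i j) w c), weightedLength p (Icc i j) c := by
  refine le_antisymm (le_iInf₂ fun c hc => ?_) (le_iInf fun c => le_iInf₂ fun h1 h2 => ?_)
  · exact iInf_le_of_le c <| iInf_le_of_le hc.1 <| iInf_le_of_le hc.2 <| iInf_le _ hc.3
  · exact le_iInf fun h3 => iInf₂_le c ⟨h1, h2, h3⟩

theorem OPT_le_weightedLength {p : ℕ → ℝ≥0} {i j w : ℕ} {c : ℕ → List Bool}
    (hc : IsAlphabeticCode (Icc i j) w c) : OPT p i j w ≤ weightedLength p (Icc i j) c :=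
  OPT_eq_iInf p i j w ▸ iInf₂_le c hc

section recurrence

variable {p : ℕ → ℝ≥0} {i j k w : ℕ}

theorem OPT_self : OPT p i i w = 0 := by
  have hnil : IsAlphabeticCode (Icc i i) w fun _ => [] :=
    ⟨fun k hk l hl hkl => by simp_all, fun k hk l hl hkl => by simp_all, by simp⟩
  exact le_antisymm ((OPT_le_weightedLength hnil).trans_eq (by simp [weightedLength])) bot_le

theorem OPT_weight_zero (hij : i < j) : OPT p i j 0 = ⊤ := by
  rw [OPT_eq_iInf, eq_top_iff]
  refine le_iInf₂ fun c hc => absurd ?_ hij.ne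
  exact hc.subsingleton_of_weight_zero (by simp [hij.le]) (by simp [hij.le])

theorem OPT_le_sum_add_OPT_add_OPT (hik : i < k) (hkj : k ≤ j) (hw : 1 ≤ w) :
    OPT p i j w ≤ ∑ m ∈ Icc i j, (p m : ℝ≥0∞) + (OPT p i (k - 1) w + OPT p k j (w - 1)) := by
  rw [OPT_eq_iInf p i (k - 1), OPT_eq_iInf p k j]
  simp only [ENNReal.add_iInf, ENNReal.iInf_add]
  refine le_iInf₂ fun cR hR => le_iInf₂ fun cL hL => ?_
  set d : ℕ → List Bool := fun m => if m < k then cL m else cR m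
  have hdL : Set.EqOn d cL (Icc i (k - 1)) := fun m hm => by
    simp only [coe_Icc, Set.mem_Icc] at hm
    simp only [d, if_pos (show m < k by omega)]
  have hdR : Set.EqOn d cR (Icc k j) := fun m hm => by
    simp only [coe_Icc, Set.mem_Icc] at hm
    simp only [d, if_neg (show ¬ m < k by omega)]
  have hd := (isAlphabeticCode_Icc_iff hik hkj hw).mpr ⟨hL.congr hdL.symm, hR.congr hdR.symm⟩
  calc OPT p i j w ≤ weightedLength p (Icc i j) (fun m => decide (k ≤ m) :: d m) :=
        OPT_le_weightedLength hd
    _ = _ := by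
      rw [weightedLength_decide_cons p hik hkj, weightedLength_congr p hdL,
        weightedLength_congr p hdR]

theorem sum_add_OPT_add_OPT_le_weightedLength (hik : i < k) (hkj : k ≤ j) (hw : 1 ≤ w)
    {d : ℕ → List Bool} (hd : IsAlphabeticCode (Icc i j) w (fun m => decide (k ≤ m) :: d m)) :
    ∑ m ∈ Icc i j, (p m : ℝ≥0∞) + (OPT p i (k - 1) w + OPT p k j (w - 1)) ≤
      weightedLength p (Icc i j) (fun m => decide (k ≤ m) :: d m) := by
  obtain ⟨hL, hR⟩ := (isAlphabeticCode_Icc_iff hik hkj hw).mp hd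
  rw [weightedLength_decide_cons p hik hkj]
  gcongr
  exacts [OPT_le_weightedLength hL, OPT_le_weightedLength hR]

theorem sum_add_iInf_le_weightedLength (hij : i < j) (hw : 1 ≤ w) {c : ℕ → List Bool}
    (hc : IsAlphabeticCode (Icc i j) w c) :
    ∑ m ∈ Icc i j, (p m : ℝ≥0∞) + ⨅ k ∈ Ioc i j, (OPT p i (k - 1) w + OPT p k j (w - 1)) ≤
      weightedLength p (Icc i j) c := by
  obtain ⟨n, hn⟩ : ∃ n, (c i).length = n := ⟨_, rfl⟩
  induction n generalizing c with
  | zero =>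
    have hi : i ∈ Icc i j := left_mem_Icc.mpr hij.le
    exact absurd (List.length_eq_zero_iff.mp hn) (hc.ne_nil hi (right_mem_Icc.mpr hij.le) hij.ne)
  | succ n ih =>
    rcases hc.eqOn_cons_tail hij with ⟨b, hb⟩ | ⟨k, hk, hkc⟩
    · have htail : IsAlphabeticCode (Icc i j) w fun m => (c m).tail :=
        (isAlphabeticCode_cons_iff b).mp ((hc.congr hb).mono subset_rfl le_self_add)
      calc _ ≤ weightedLength p (Icc i j) (fun m => (c m).tail) := ih htail (by simp [hn])
        _ ≤ ∑ m ∈ Icc i j, (p m : ℝ≥0∞) + weightedLength p (Icc i j) (fun m => (c m).tail) :=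
          le_add_self
        _ = weightedLength p (Icc i j) c :=
          ((weightedLength_congr p hb).trans (weightedLength_cons p (fun _ => b) _)).symm
    · obtain ⟨hik, hkj⟩ := mem_Ioc.mp hk
      calc _ ≤ ∑ m ∈ Icc i j, (p m : ℝ≥0∞) + (OPT p i (k - 1) w + OPT p k j (w - 1)) := by
            gcongr; exact iInf₂_le k hk
        _ ≤ _ := sum_add_OPT_add_OPT_le_weightedLength hik hkj hw (hc.congr hkc)
        _ = weightedLength p (Icc i j) c := (weightedLength_congr p hkc).symm

theorem OPT_eq_sum_add_iInf (hij : i < j) (hw : 1 ≤ w) :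
    OPT p i j w = ∑ m ∈ Icc i j, (p m : ℝ≥0∞) +
      ⨅ k ∈ Ioc i j, (OPT p i (k - 1) w + OPT p k j (w - 1)) := by
  refine le_antisymm ?_ ?_
  · simp only [ENNReal.add_iInf]
    exact le_iInf₂ fun k hk =>
      OPT_le_sum_add_OPT_add_OPT (mem_Ioc.mp hk).1 (mem_Ioc.mp hk).2 hw
  · rw [OPT_eq_iInf]
    exact le_iInf₂ fun c hc => sum_add_iInf_le_weightedLength hij hw hc

end recurrence

/-- **The dynamic-programming recurrence (eq. (2) of the paper).** `OPT(i,i,w) = 0` for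
all `w ≥ 0`; `OPT(i,j,0) = ∞` for `i < j`; and for all `1 ≤ i < j ≤ n` and `w ≥ 1`,
`OPT(i,j,w) = (p_i + ⋯ + p_j) + min_{i < k ≤ j} (OPT(i,k-1,w) + OPT(k,j,w-1))`. -/
theorem OPT_recurrence (n : ℕ) (p : ℕ → ℝ≥0) :
    (∀ i w : ℕ, OPT p i i w = 0) ∧
    (∀ i j : ℕ, i < j → OPT p i j 0 = ⊤) ∧
    (∀ i j w : ℕ, 1 ≤ i → i < j → j ≤ n → 1 ≤ w →
      OPT p i j w = (∑ k ∈ Finset.Icc i j, (p k : ℝ≥0∞)) +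
        ⨅ k ∈ Finset.Ioc i j, (OPT p i (k - 1) w + OPT p k j (w - 1))) :=
  ⟨fun _ _ => OPT_self, fun _ _ => OPT_weight_zero,
    fun _ _ _ _ hij _ hw => OPT_eq_sum_add_iInf hij hw⟩
end

section
/- Let ℓ_1,…,ℓ_n be the codeword lengths of a prefix code on {1,…,n} in which every codeword contains at most D ones and which is full, i.e., Σ_{i=1}^n 2^{−ℓ_i} = 1. Then condition (*) holds. -/
open scoped BigOperators

/-- `Ncount n ℓ j` is the number of indices `i` with `ℓ i = j`. -/
def Ncount (n : ℕ) (ℓ : Fin n → ℕ) (j : ℕ) : ℕ :=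
  (Finset.univ.filter fun i => ℓ i = j).card

/-- `Mrec N L j` is the quantity `M_j` defined by `M_j = 0` for `j > L` and
`M_j = ⌈(N_j + M_{j+1}) / 2⌉` for `j ≤ L`. -/
def Mrec (N : ℕ → ℕ) (L : ℕ) (j : ℕ) : ℕ :=
  if L < j then 0 else (N j + Mrec N L (j + 1) + 1) / 2
termination_by L + 1 - j
decreasing_by omega

/-!
Fullness makes the code complete: a word incomparable with every codeword could be added to it,
and the Kraft–McMillan inequality for the enlarged prefix code would be violated. In the code
tree let `C_j` be the codewords and `A_j` the proper prefixes of codewords of length `j`. Every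
node of depth `j + 1` has its parent in `A_j`, so `|C_{j+1}| + |A_{j+1}| ≤ 2 |A_j|`, and downward
induction gives `M_{j+1} ≤ |A_j|`, hence `N_j + M_{j+1} ≤ |C_j ∪ A_j|`. A node has at most `D`
ones, and a node with exactly `D` ones ends in `1`: otherwise flipping its last bit gives a word
with `D + 1` ones that is comparable with no codeword. Counting the binary words of length `j`
with these two properties gives the bound.
-/

open Finset InformationTheory

variable {α ι : Type*}

def IsPrefixFree (w : ι → List α) : Prop := ∀ i j, i ≠ j → ¬ w i <+: w j

theorem IsPrefixFree.injective {w : ι → List α} (hw : IsPrefixFree w) : Function.Injective w :=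
  fun i j hij => by_contra fun hne => hw i j hne (hij ▸ List.prefix_refl _)

theorem uniquelyDecodable_of_prefixFree {S : Set (List α)}
    (hS : ∀ a ∈ S, ∀ b ∈ S, a <+: b → a = b) (hnil : [] ∉ S) : UniquelyDecodable S := by
  intro L₁
  induction L₁ with
  | nil =>
    rintro (_ | ⟨b, L₂⟩) - h₂ hflat
    · rfl
    · simp only [List.flatten_nil, List.flatten_cons, List.nil_eq, List.append_eq_nil_iff] at hflat
      exact absurd (hflat.1 ▸ h₂ b List.mem_cons_self) hnil
  | cons a L₁ ih =>
    rintro (_ | ⟨b, L₂⟩) h₁ h₂ hflat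
    · simp only [List.flatten_nil, List.flatten_cons, List.append_eq_nil_iff] at hflat
      exact absurd (hflat.1 ▸ h₁ a List.mem_cons_self) hnil
    · simp only [List.flatten_cons] at hflat
      have ha := h₁ a List.mem_cons_self
      have hb := h₂ b List.mem_cons_self
      have hab : a = b := by
        rcases List.prefix_or_prefix_of_prefix (hflat ▸ List.prefix_append a _)
          (List.prefix_append b _) with h | h
        · exact hS a ha b hb h
        · exact (hS b hb a ha h).symm
      subst hab
      rw [ih L₂ (fun x hx => h₁ x (List.mem_cons_of_mem a hx))
        (fun x hx => h₂ x (List.mem_cons_of_mem a hx)) (List.append_cancel_left hflat)]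

theorem exists_prefix_or_prefix_of_sum_eq_one [Fintype α] [Nonempty α] [DecidableEq α]
    [Fintype ι] {w : ι → List α} (hw : IsPrefixFree w)
    (hsum : ∑ i, (Fintype.card α : ℝ) ^ (-((w i).length : ℤ)) = 1) (u : List α) :
    ∃ i, w i <+: u ∨ u <+: w i := by
  by_contra! hu
  have hsum' : ∑ x ∈ univ.image w, (1 / Fintype.card α : ℝ) ^ x.length = 1 := by
    rw [sum_image fun i _ j _ h => hw.injective h]
    simpa only [one_div, inv_pow, zpow_neg, zpow_natCast] using hsum
  obtain ⟨i₀⟩ : Nonempty ι := by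
    by_contra! h
    simp at hsum
  have hu_notMem : u ∉ univ.image w := by
    simp only [mem_image, mem_univ, true_and, not_exists]
    exact fun i h => (hu i).1 (h ▸ List.prefix_refl u)
  set S := insert u (univ.image w)
  have hS : ∀ a ∈ (S : Set (List α)), ∀ b ∈ (S : Set (List α)), a <+: b → a = b := by
    simp only [S, coe_insert, coe_image, coe_univ, Set.image_univ, Set.mem_insert_iff,
      Set.mem_range]
    rintro a (rfl | ⟨i, rfl⟩) b (rfl | ⟨k, rfl⟩) hab
    · rfl
    · exact absurd hab (hu k).2
    · exact absurd hab (hu i).1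
    · exact congrArg w (by_contra fun hik => hw i k hik hab)
  have hnil : [] ∉ (S : Set (List α)) := by
    simp only [S, coe_insert, coe_image, coe_univ, Set.image_univ, Set.mem_insert_iff,
      Set.mem_range, not_or, not_exists]
    exact ⟨fun h => (hu i₀).2 (h ▸ List.nil_prefix),
      fun i h => (hu i).1 (h ▸ List.nil_prefix)⟩
  have hkraft := kraft_mcmillan_inequality (uniquelyDecodable_of_prefixFree hS hnil)
  rw [sum_insert hu_notMem, hsum'] at hkraft
  have : (0 : ℝ) < (1 / Fintype.card α : ℝ) ^ u.length := by positivity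
  linarith

theorem Mrec_succ_le {N a : ℕ → ℕ} (h : ∀ j, N (j + 1) + a (j + 1) ≤ 2 * a j)
    (L j : ℕ) :
    Mrec N L (j + 1) ≤ a j := by
  rw [Mrec]
  split_ifs
  · exact Nat.zero_le _
  · have := Mrec_succ_le h L (j + 1)
    have := h j
    omega
termination_by L - j

theorem card_le_mul_card_image_take [Fintype α] [DecidableEq α] {S : Finset (List α)} {j : ℕ}
    (hS : ∀ v ∈ S, v.length = j + 1) :
    S.card ≤ Fintype.card α * (S.image (List.take j)).card := by
  refine card_le_mul_card_image S _ fun b _ => ?_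
  calc {v ∈ S | v.take j = b}.card
      = ({v ∈ S | v.take j = b}.image (List.drop j)).card := by
        refine (card_image_of_injOn fun v hv v' hv' h => ?_).symm
        simp only [coe_filter, Set.mem_ofPred_eq] at hv hv'
        rw [← List.take_append_drop j v, ← List.take_append_drop j v', hv.2, hv'.2, h]
    _ = {x ∈ {v ∈ S | v.take j = b}.image (List.drop j) | x.length = 1}.card := by
        congr 1
        refine (filter_true_of_mem fun x hx => ?_).symm
        obtain ⟨v, hv, rfl⟩ := mem_image.mp hx
        have := hS v (mem_filter.mp hv).1
        simp only [List.length_drop]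
        omega
    _ ≤ Fintype.card α ^ 1 := card_filter_length_eq_le
    _ = Fintype.card α := pow_one _

section Levels

variable [Fintype ι] [DecidableEq α] (w : ι → List α)

def codewordsOfLength (j : ℕ) : Finset (List α) :=
  (univ.filter fun i => (w i).length = j).image w

def properPrefixesOfLength (j : ℕ) : Finset (List α) :=
  (univ.filter fun i => j < (w i).length).image fun i => (w i).take j

variable {w}

theorem card_codewordsOfLength (hw : IsPrefixFree w) (j : ℕ) :
    (codewordsOfLength w j).card = #{i | (w i).length = j} :=
  card_image_of_injective _ hw.injective

theorem disjoint_codewordsOfLength_properPrefixesOfLength (hw : IsPrefixFree w) (j : ℕ) :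
    Disjoint (codewordsOfLength w j) (properPrefixesOfLength w j) := by
  simp only [codewordsOfLength, properPrefixesOfLength, disjoint_left, mem_image, mem_filter,
    mem_univ, true_and]
  rintro _ ⟨i, hi, rfl⟩ ⟨k, hk, hki⟩
  refine hw i k (by rintro rfl; omega) ?_
  rw [← hki]
  exact List.take_prefix j (w k)

theorem mem_codewordsOfLength_union_properPrefixesOfLength {j : ℕ} {v : List α} :
    v ∈ codewordsOfLength w j ∪ properPrefixesOfLength w j ↔
      v.length = j ∧ ∃ k, v <+: w k := by
  simp only [codewordsOfLength, properPrefixesOfLength, mem_union, mem_image, mem_filter,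
    mem_univ, true_and]
  constructor
  · rintro (⟨i, rfl, rfl⟩ | ⟨i, hi, rfl⟩)
    · exact ⟨rfl, i, List.prefix_refl _⟩
    · exact ⟨by simp; omega, i, List.take_prefix _ _⟩
  · rintro ⟨rfl, k, hk⟩
    rcases hk.length_le.eq_or_lt with h | h
    · exact Or.inl ⟨k, h.symm, (hk.eq_of_length h).symm⟩
    · exact Or.inr ⟨k, h, (List.prefix_iff_eq_take.mp hk).symm⟩

theorem card_codewordsOfLength_succ_add_card_properPrefixesOfLength_succ_le [Fintype α]
    (hw : IsPrefixFree w) (j : ℕ) :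
    (codewordsOfLength w (j + 1)).card + (properPrefixesOfLength w (j + 1)).card ≤
      Fintype.card α * (properPrefixesOfLength w j).card := by
  rw [← card_union_of_disjoint (disjoint_codewordsOfLength_properPrefixesOfLength hw _)]
  refine (card_le_mul_card_image_take (j := j) fun v hv => ?_).trans
    (Nat.mul_le_mul_left _ (card_le_card fun b hb => ?_))
  · exact (mem_codewordsOfLength_union_properPrefixesOfLength.mp hv).1
  · obtain ⟨v, hv, rfl⟩ := mem_image.mp hb
    obtain ⟨hv, k, hk⟩ := mem_codewordsOfLength_union_properPrefixesOfLength.mp hv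
    simp only [properPrefixesOfLength, mem_image, mem_filter, mem_univ, true_and]
    refine ⟨k, by have := hk.length_le; omega, ?_⟩
    rw [List.prefix_iff_eq_take.mp hk, List.take_take, hv]
    simp

end Levels

theorem card_filter_getElem?_eq_some_true {v : List Bool} {j : ℕ} (hlen : v.length = j) :
    (univ.filter fun p : Fin j => v[p.val]? = some true).card = v.count true := by
  subst hlen
  refine Eq.trans ?_ (Fin.card_filter_univ_eq_vector_get_eq_count true
    (⟨v, rfl⟩ : List.Vector Bool _))
  congr 1
  ext p
  rw [mem_filter, mem_filter]
  simp [List.Vector.get]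

theorem card_le_choose_of_count_eq {T : Finset (List Bool)} {j i : ℕ}
    (hT : ∀ v ∈ T, v.length = j ∧ v.count true = i) : T.card ≤ j.choose i := by
  let trues : List Bool → Finset (Fin j) := fun v => univ.filter fun p => v[p.val]? = some true
  have card_trues : ∀ v ∈ T, (trues v).card = i := fun v hv =>
    (card_filter_getElem?_eq_some_true (hT v hv).1).trans (hT v hv).2
  have trues_injOn : Set.InjOn trues T := fun v hv v' hv' h => by
    have hlen := (hT v hv).1
    have hlen' := (hT v' hv').1
    refine List.ext_getElem? fun n => ?_
    by_cases hn : n < j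
    · have := congrArg (⟨n, hn⟩ ∈ ·) h
      simp only [trues, mem_filter, mem_univ, true_and, eq_iff_iff] at this
      rw [List.getElem?_eq_getElem (hlen ▸ hn), List.getElem?_eq_getElem (hlen' ▸ hn)]
        at this ⊢
      simpa using this
    · rw [List.getElem?_eq_none (by omega), List.getElem?_eq_none (by omega)]
  calc T.card ≤ (powersetCard i (univ : Finset (Fin j))).card :=
        card_le_card_of_injOn trues
          (fun v hv => mem_powersetCard.mpr ⟨subset_univ _, card_trues v hv⟩) trues_injOn
    _ = j.choose i := by simp

theorem card_le_sum_choose_add_choose {T : Finset (List Bool)} {j D : ℕ}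
    (hlen : ∀ v ∈ T, v.length = j) (hcount : ∀ v ∈ T, v.count true ≤ D)
    (hlast : ∀ v ∈ T, v.count true = D → v.getLast? = some true) :
    T.card ≤ ∑ i ∈ range D, j.choose i + (j - 1).choose (D - 1) := by
  rw [← card_filter_add_card_filter_not (fun v => v.count true < D)]
  refine add_le_add ?_ ?_
  · rw [card_eq_sum_card_fiberwise (f := fun v : List Bool => v.count true) (t := range D)
      fun v hv => mem_range.mpr (mem_filter.mp hv).2]
    refine sum_le_sum fun i _ => card_le_choose_of_count_eq fun v hv => ?_
    simp only [mem_filter] at hv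
    exact ⟨hlen v hv.1.1, hv.2⟩
  · have hsplit : ∀ v ∈ {v ∈ T | ¬ v.count true < D}, v.dropLast ++ [true] = v :=
      fun v hv => by
      simp only [mem_filter] at hv
      exact List.dropLast_append_getLast? true
        (hlast v hv.1 (le_antisymm (hcount v hv.1) (not_lt.mp hv.2)))
    rw [← card_image_of_injOn fun v hv v' hv' h => by
      rw [← hsplit v hv, ← hsplit v' hv', show v.dropLast = v'.dropLast from h]]
    refine card_le_choose_of_count_eq fun u hu => ?_
    obtain ⟨v, hv, rfl⟩ := mem_image.mp hu
    have hv' := hsplit v hv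
    simp only [mem_filter] at hv
    have h1 := congrArg List.length hv'
    have h2 := congrArg (List.count true) hv'
    simp only [List.length_append, List.length_singleton, List.count_append,
      List.count_singleton_self] at h1 h2
    have := hlen v hv.1
    have := hcount v hv.1
    omega

theorem getLast?_eq_some_true_of_count_eq {w : ι → List Bool} {D : ℕ} (hw : IsPrefixFree w)
    (hones : ∀ i, (w i).count true ≤ D) (hcomplete : ∀ u, ∃ i, w i <+: u ∨ u <+: w i)
    {v : List Bool} {k : ι} (hvk : v <+: w k) (hv : v ≠ []) (hcount : v.count true = D) :
    v.getLast? = some true := by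
  obtain ⟨t, b, rfl⟩ := (List.eq_nil_or_concat' v).resolve_left hv
  cases b
  · have hcount_flip : (t ++ [true]).count true = D + 1 := by simpa using hcount
    obtain ⟨i, hi | hi⟩ := hcomplete (t ++ [true])
    · rcases List.prefix_concat_iff.mp hi with hi | hit
      · have := hones i
        rw [hi] at this
        omega
      · have hik : i ≠ k := by
          rintro rfl
          have := hit.length_le
          have := hvk.length_le
          simp only [List.length_append, List.length_singleton] at this
          omega
        exact absurd (hit.trans ((List.prefix_append t [false]).trans hvk)) (hw i k hik)
    · have := hi.count_le true
      have := hones i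
      omega
  · simp

theorem card_codewordsOfLength_union_properPrefixesOfLength_le [Fintype ι] {w : ι → List Bool}
    {D j : ℕ} (hw : IsPrefixFree w) (hones : ∀ i, (w i).count true ≤ D)
    (hcomplete : ∀ u, ∃ i, w i <+: u ∨ u <+: w i) (hj : 1 ≤ j) :
    (codewordsOfLength w j ∪ properPrefixesOfLength w j).card ≤
      ∑ i ∈ range D, j.choose i + (j - 1).choose (D - 1) := by
  refine card_le_sum_choose_add_choose (fun v hv => ?_) (fun v hv => ?_) fun v hv => ?_ <;>
    obtain ⟨hlen, k, hk⟩ := mem_codewordsOfLength_union_properPrefixesOfLength.mp hv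
  · exact hlen
  · exact (hk.count_le true).trans (hones k)
  · exact getLast?_eq_some_true_of_count_eq hw hones hcomplete hk
      (List.ne_nil_of_length_pos (by omega))

theorem condition_of_full_prefix_code_general
    (n D : ℕ) (w : Fin n → List Bool)
    (hpf : ∀ i j, i ≠ j → ¬ (w i <+: w j))
    (hones : ∀ i, (w i).count true ≤ D)
    (hfull : ∑ i : Fin n, (2 : ℝ) ^ (-((w i).length : ℤ)) = 1) :
    ∀ j : ℕ, 1 ≤ j → j ≤ Finset.univ.sup (fun i => (w i).length) →
      Ncount n (fun i => (w i).length) j +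
        Mrec (Ncount n (fun i => (w i).length))
          (Finset.univ.sup (fun i => (w i).length)) (j + 1) ≤
        (∑ i ∈ Finset.range D, j.choose i) + (j - 1).choose (D - 1) := by
  intro j hj _
  have hcomplete := exists_prefix_or_prefix_of_sum_eq_one hpf (by simpa using hfull)
  have hN : ∀ m, Ncount n (fun i => (w i).length) m = (codewordsOfLength w m).card :=
    fun m => (card_codewordsOfLength hpf m).symm
  have hM : Mrec (Ncount n fun i => (w i).length) (univ.sup fun i => (w i).length) (j + 1) ≤
      (properPrefixesOfLength w j).card :=
    Mrec_succ_le (N := Ncount n fun i => (w i).length)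
      (a := fun m => (properPrefixesOfLength w m).card) (fun m => by
        simpa [hN] using card_codewordsOfLength_succ_add_card_properPrefixesOfLength_succ_le hpf m)
      _ j
  calc _ ≤ (codewordsOfLength w j).card + (properPrefixesOfLength w j).card := by
        rw [hN]
        exact Nat.add_le_add_left hM _
    _ = (codewordsOfLength w j ∪ properPrefixesOfLength w j).card :=
        (card_union_of_disjoint (disjoint_codewordsOfLength_properPrefixesOfLength hpf j)).symm
    _ ≤ _ := card_codewordsOfLength_union_properPrefixesOfLength_le hpf hones hcomplete hj

/-- **Lemma 3 (necessity of the Kraft-like condition for full codes).** If `ℓ_1,…,ℓ_n`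
are the codeword lengths of a prefix code in which every codeword contains at most `D`
ones and whose tree representation is a full binary tree (i.e. `∑ 2^{-ℓ_i} = 1`), then
for all `1 ≤ j ≤ L` (with `L = max_i ℓ_i`) it holds that
`N_j + M_{j+1} ≤ ∑_{i=0}^{D-1} C(j,i) + C(j-1,D-1)`. -/
theorem condition_of_full_prefix_code
    (n D : ℕ) (hD : 1 ≤ D) (w : Fin n → List Bool)
    (hpf : ∀ i j, i ≠ j → ¬ (w i <+: w j))
    (hones : ∀ i, (w i).count true ≤ D)
    (hfull : ∑ i : Fin n, (2 : ℝ) ^ (-((w i).length : ℤ)) = 1) :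
    ∀ j : ℕ, 1 ≤ j → j ≤ Finset.univ.sup (fun i => (w i).length) →
      Ncount n (fun i => (w i).length) j +
        Mrec (Ncount n (fun i => (w i).length))
          (Finset.univ.sup (fun i => (w i).length)) (j + 1) ≤
        (∑ i ∈ Finset.range D, j.choose i) + (j - 1).choose (D - 1) :=
  condition_of_full_prefix_code_general n D w hpf hones hfull
end

section
/- For any prefix code on {1,…,n} with codeword lengths ℓ_1,…,ℓ_n and L = max_i ℓ_i, and for every j with 0 ≤ j ≤ L, the number of binary strings of length j that are proper prefixes of at least one codeword is at least M_{j+1}, where N_k = |{i : ℓ_i = k}|, M_k = 0 for k > L, and M_k = ⌈(N_k + M_{k+1})/2⌉ for 1 ≤ k ≤ L. -/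
open scoped BigOperators

theorem Mrec_succ_le_of_forall_add_le_two_mul {N B : ℕ → ℕ} (L : ℕ)
    (hB : ∀ j, N (j + 1) + B (j + 1) ≤ 2 * B j) (j : ℕ) : Mrec N L (j + 1) ≤ B j := by
  rw [Mrec]
  split_ifs with hL
  · exact Nat.zero_le _
  · have hnext := Mrec_succ_le_of_forall_add_le_two_mul L hB (j + 1)
    have hj := hB j
    omega
termination_by L + 1 - j

section PrefixCode

variable {α ι : Type*}

def blockedNodes (w : ι → List α) (j : ℕ) : Set (List α) :=
  {s | s.length = j ∧ ∃ i, s <+: w i ∧ s ≠ w i}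

theorem blockedNodes_finite [Finite α] (w : ι → List α) (j : ℕ) :
    (blockedNodes w j).Finite :=
  (List.finite_length_eq α j).subset fun _ hs => hs.1

theorem dropLast_mem_blockedNodes {w : ι → List α} {s : List α} {i : ι} {j : ℕ}
    (hs : s.length = j + 1) (hsi : s <+: w i) : s.dropLast ∈ blockedNodes w j := by
  have hlen : s.dropLast.length = j := by simp [hs]
  refine ⟨hlen, i, (List.dropLast_prefix s).trans hsi, fun h => ?_⟩
  have := hsi.length_le
  rw [← h] at this
  omega

theorem injective_of_prefix_free {w : ι → List α} (hpf : ∀ i j, i ≠ j → ¬ w i <+: w j) :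
    Function.Injective w := fun i j hij =>
  by_contra fun hne => hpf i j hne (hij ▸ List.prefix_refl _)

theorem disjoint_image_blockedNodes {w : ι → List α} (hpf : ∀ i j, i ≠ j → ¬ w i <+: w j)
    (S : Set ι) (j : ℕ) : Disjoint (w '' S) (blockedNodes w j) := by
  rw [Set.disjoint_left]
  rintro _ ⟨i, -, rfl⟩ ⟨-, k, hik, hne⟩
  exact hpf i k (fun h => hne (h ▸ rfl)) hik

theorem ncard_image_length_add_ncard_blockedNodes_le [Finite α] {w : ι → List α}
    (hpf : ∀ i j, i ≠ j → ¬ w i <+: w j) (j : ℕ) :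
    (w '' {i | (w i).length = j + 1}).ncard + (blockedNodes w (j + 1)).ncard ≤
      Nat.card α * (blockedNodes w j).ncard := by
  set C := w '' {i | (w i).length = j + 1}
  have hC : C.Finite :=
    (List.finite_length_eq α (j + 1)).subset (by rintro _ ⟨i, hi, rfl⟩; exact hi)
  have hchild : C ∪ blockedNodes w (j + 1) ⊆
      (fun p : List α × α => p.1 ++ [p.2]) '' (blockedNodes w j ×ˢ Set.univ) := by
    intro s hs
    obtain ⟨hlen, i, hsi⟩ : s.length = j + 1 ∧ ∃ i, s <+: w i := by
      rcases hs with ⟨i, hi, rfl⟩ | ⟨hlen, i, hsi, -⟩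
      exacts [⟨hi, i, List.prefix_refl _⟩, ⟨hlen, i, hsi⟩]
    have hne : s ≠ [] := List.ne_nil_of_length_eq_add_one hlen
    exact ⟨(s.dropLast, s.getLast hne), ⟨dropLast_mem_blockedNodes hlen hsi, trivial⟩,
      List.dropLast_append_getLast hne⟩
  have hB := blockedNodes_finite w j
  calc C.ncard + (blockedNodes w (j + 1)).ncard
      = (C ∪ blockedNodes w (j + 1)).ncard :=
        (Set.ncard_union_eq (disjoint_image_blockedNodes hpf _ _) hC
          (blockedNodes_finite w _)).symm
    _ ≤ ((fun p : List α × α => p.1 ++ [p.2]) '' (blockedNodes w j ×ˢ Set.univ)).ncard :=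
        Set.ncard_le_ncard hchild ((hB.prod Set.finite_univ).image _)
    _ ≤ (blockedNodes w j ×ˢ (Set.univ : Set α)).ncard :=
        Set.ncard_image_le (hB.prod Set.finite_univ)
    _ = Nat.card α * (blockedNodes w j).ncard := by
        rw [Set.ncard_prod, Set.ncard_univ, mul_comm]

end PrefixCode

theorem Ncount_eq_ncard_image {n : ℕ} {α : Type*} {w : Fin n → List α}
    (hw : Function.Injective w) (k : ℕ) :
    Ncount n (fun i => (w i).length) k = (w '' {i | (w i).length = k}).ncard := by
  rw [Set.ncard_image_of_injective _ hw, Ncount, ← Set.ncard_coe_finset, Finset.coe_filter]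
  simp

theorem blocked_nodes_lower_bound_general
    (n : ℕ) (w : Fin n → List Bool)
    (hpf : ∀ i j, i ≠ j → ¬ (w i <+: w j))
    (j : ℕ) :
    Mrec (Ncount n (fun i => (w i).length))
        (Finset.univ.sup (fun i => (w i).length)) (j + 1) ≤
      {s : List Bool | s.length = j ∧ ∃ i : Fin n, s <+: w i ∧ s ≠ w i}.ncard := by
  refine Mrec_succ_le_of_forall_add_le_two_mul (B := fun k => (blockedNodes w k).ncard) _
    (fun k => ?_) j
  rw [Ncount_eq_ncard_image (injective_of_prefix_free hpf)]
  simpa using ncard_image_length_add_ncard_blockedNodes_le hpf k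

/-- **`M_{j+1}` lower-bounds the number of blocked nodes at level `j`.** For any prefix
code on `{1,…,n}` with codeword lengths `ℓ_i = |w i|` and `L = max_i ℓ_i`, and for every
`0 ≤ j ≤ L`, the number of binary strings of length `j` that are proper prefixes of at
least one codeword is at least `M_{j+1}`. -/
theorem blocked_nodes_lower_bound
    (n : ℕ) (w : Fin n → List Bool)
    (hpf : ∀ i j, i ≠ j → ¬ (w i <+: w j))
    (j : ℕ) (hj : j ≤ Finset.univ.sup (fun i => (w i).length)) :
    Mrec (Ncount n (fun i => (w i).length))
        (Finset.univ.sup (fun i => (w i).length)) (j + 1) ≤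
      {s : List Bool | s.length = j ∧ ∃ i : Fin n, s <+: w i ∧ s ≠ w i}.ncard :=
  blocked_nodes_lower_bound_general n w hpf j
end

section
/- Let n ≥ 1 and let p_1 ≤ p_2 ≤ … ≤ p_n be a nondecreasing probability distribution on symbols {1,…,n}. Then there exists a prefix code w* that attains the minimum of Σ_i p_i·|w(i)| over ALL prefix codes w on {1,…,n}, and such that every codeword of w* contains at most log₂ n ones (i.e., ones(w*(i)) ≤ log₂ n for every i). -/
/-!
Only length vectors with Kraft sum `∑ 2^(-ℓᵢ) = 1` matter: a prefix code satisfies Kraft's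
inequality, and shortening its longest words until the Kraft sum is exactly one does not raise
the cost since `p ≥ 0`. Such vectors are finitely many (every length is below `n`), so one of them
minimises the cost. Lengths with Kraft sum one split into two groups of Kraft sum `1/2` each;
prefixing the smaller group with `1`, the other with `0`, and recursing yields a prefix code with
these lengths in which a word gains a `1` only when its group shrinks to at most half, so it has
at most `log₂ n` ones.
-/

open Finset InformationTheory

theorem uniquelyDecodable_of_pairwise_not_prefix {α : Type*} {S : Set (List α)} (hnil : [] ∉ S)
    (hS : S.Pairwise fun a b => ¬ a <+: b) : UniquelyDecodable S := by
  intro L₁ L₂ h₁ h₂ h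
  induction L₁ generalizing L₂ with
  | nil =>
    cases L₂ with
    | nil => rfl
    | cons b u => exact absurd (h₂ b (by simp)) (by simp_all)
  | cons a t ih =>
    cases L₂ with
    | nil => exact absurd (h₁ a (by simp)) (by simp_all)
    | cons b u =>
      rw [List.flatten_cons, List.flatten_cons] at h
      obtain rfl : a = b := by
        by_contra hab
        have ha := h₁ a List.mem_cons_self
        have hb := h₂ b List.mem_cons_self
        rcases List.prefix_or_prefix_of_prefix (List.prefix_append a _)
            (h ▸ List.prefix_append b _) with hp | hp
        exacts [hS ha hb hab hp, hS hb ha (Ne.symm hab) hp]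
      rw [ih u (fun c hc => h₁ c (List.mem_cons_of_mem a hc))
        (fun c hc => h₂ c (List.mem_cons_of_mem a hc)) (List.append_cancel_left h)]

variable {ι : Type*}

noncomputable def kraftSum (s : Finset ι) (ℓ : ι → ℕ) : ℝ := ∑ i ∈ s, (1 / 2 : ℝ) ^ ℓ i

variable {s : Finset ι} {ℓ : ι → ℕ}

theorem kraftSum_length_le_one {w : ι → List Bool}
    (hw : (s : Set ι).Pairwise fun i j => ¬ w i <+: w j) :
    kraftSum s (fun i => (w i).length) ≤ 1 := by
  by_cases hnil : ∃ i ∈ s, w i = []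
  · obtain ⟨i, hi, hwi⟩ := hnil
    have hs : s = {i} := eq_singleton_iff_unique_mem.2
      ⟨hi, fun j hj => by_contra fun hji => hw hi hj (Ne.symm hji) (hwi ▸ List.nil_prefix)⟩
    simp [kraftSum, hs, hwi]
  · have hinj : Set.InjOn w s := fun i hi j hj hij =>
      by_contra fun hne => hw hi hj hne (hij ▸ List.prefix_refl _)
    have hUD : UniquelyDecodable (s.image w : Set (List Bool)) := by
      refine uniquelyDecodable_of_pairwise_not_prefix (by simpa using hnil) ?_
      rw [coe_image]
      rintro _ ⟨i, hi, rfl⟩ _ ⟨j, hj, rfl⟩ hne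
      exact hw hi hj fun h => hne (h ▸ rfl)
    simpa [kraftSum, sum_image hinj] using kraft_mcmillan_inequality hUD

theorem kraftSum_eq_natCast_mul {M : ℕ} (hM : ∀ i ∈ s, ℓ i ≤ M) :
    kraftSum s ℓ = (∑ i ∈ s, 2 ^ (M - ℓ i) : ℕ) * (1 / 2 : ℝ) ^ M := by
  rw [kraftSum, Nat.cast_sum, sum_mul]
  refine sum_congr rfl fun i hi => ?_
  obtain ⟨k, rfl⟩ := Nat.exists_eq_add_of_le (hM i hi)
  rw [Nat.add_sub_cancel_left, pow_add, Nat.cast_pow, ← mul_assoc, mul_comm, ← mul_assoc,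
    ← mul_pow]
  norm_num

theorem kraftSum_add_pow_le_one {M : ℕ} (hM : ∀ i ∈ s, ℓ i ≤ M) (h : kraftSum s ℓ < 1) :
    kraftSum s ℓ + (1 / 2 : ℝ) ^ M ≤ 1 := by
  rw [kraftSum_eq_natCast_mul hM] at h ⊢
  set N := ∑ i ∈ s, 2 ^ (M - ℓ i)
  have hpos : (0 : ℝ) < 2 ^ M := by positivity
  rw [div_pow, one_pow, ← div_eq_mul_one_div, div_lt_one hpos] at h
  have hN : (N + 1 : ℝ) ≤ 2 ^ M := by exact_mod_cast Nat.succ_le_of_lt (by exact_mod_cast h)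
  rw [div_pow, one_pow, ← div_eq_mul_one_div, ← add_div, div_le_one hpos]
  exact hN

theorem kraftSum_sub_one (h : ∀ i ∈ s, ℓ i ≠ 0) :
    kraftSum s (fun i => ℓ i - 1) = 2 * kraftSum s ℓ := by
  rw [kraftSum, kraftSum, mul_sum]
  refine sum_congr rfl fun i hi => ?_
  obtain ⟨k, hk⟩ := Nat.exists_eq_add_one_of_ne_zero (h i hi)
  rw [hk, Nat.add_sub_cancel, pow_succ]
  ring

theorem eq_singleton_of_kraftSum_le_one {i : ι} (h : kraftSum s ℓ ≤ 1) (hi : i ∈ s)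
    (hℓ : ℓ i = 0) : s = {i} := by
  classical
  refine eq_singleton_iff_unique_mem.2 ⟨hi, fun j hj => by_contra fun hji => ?_⟩
  have : ∑ k ∈ {i, j}, (1 / 2 : ℝ) ^ ℓ k ≤ kraftSum s ℓ :=
    sum_le_sum_of_subset_of_nonneg (by simp [insert_subset_iff, hi, hj])
      (fun _ _ _ => by positivity)
  rw [sum_pair (Ne.symm hji), hℓ, pow_zero] at this
  linarith [pow_pos (one_half_pos (α := ℝ)) (ℓ j)]

theorem exists_le_kraftSum_eq_one [DecidableEq ι] (hs : s.Nonempty) (h : kraftSum s ℓ ≤ 1) :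
    ∃ ℓ' : ι → ℕ, (∀ i ∈ s, ℓ' i ≤ ℓ i) ∧ kraftSum s ℓ' = 1 := by
  induction hN : ∑ i ∈ s, ℓ i using Nat.strong_induction_on generalizing ℓ with
  | _ N ih =>
  rcases h.eq_or_lt with h | h
  · exact ⟨ℓ, fun _ _ => le_rfl, h⟩
  obtain ⟨i₀, hi₀, hmax⟩ := s.exists_max_image ℓ hs
  have hpos : ℓ i₀ ≠ 0 := fun h0 => by
    have := eq_singleton_of_kraftSum_le_one h.le hi₀ h0
    simp [kraftSum, this, h0] at h
  set ℓ' := Function.update ℓ i₀ (ℓ i₀ - 1)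
  have hle : ∀ i ∈ s, ℓ' i ≤ ℓ i := fun i _ => by
    by_cases hi : i = i₀ <;> simp [ℓ', hi]
  have hsum : kraftSum s ℓ' = kraftSum s ℓ + (1 / 2 : ℝ) ^ ℓ i₀ := by
    obtain ⟨k, hk⟩ := Nat.exists_eq_add_one_of_ne_zero hpos
    simp_rw [kraftSum, ℓ', Function.apply_update (fun _ k => (1 / 2 : ℝ) ^ k)]
    rw [sum_update_of_mem hi₀, ← add_sum_erase s _ hi₀, sdiff_singleton_eq_erase, hk,
      Nat.add_sub_cancel, pow_succ]
    ring
  obtain ⟨ℓ'', hle', h''⟩ := ih _ (hN ▸ sum_lt_sum hle ⟨i₀, hi₀, by simp [ℓ']; omega⟩)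
    (hsum ▸ kraftSum_add_pow_le_one hmax h) rfl
  exact ⟨ℓ'', fun i hi => (hle' i hi).trans (hle i hi), h''⟩

theorem nonempty_of_kraftSum_eq_one (h : kraftSum s ℓ = 1) : s.Nonempty :=
  nonempty_of_sum_ne_zero (by rw [← kraftSum, h]; exact one_ne_zero)

theorem exists_subset_kraftSum_eq {m : ℕ} (hm : ∀ i ∈ s, m ≤ ℓ i)
    (hs : (1 / 2 : ℝ) ^ m ≤ kraftSum s ℓ) : ∃ t ⊆ s, kraftSum t ℓ = (1 / 2 : ℝ) ^ m := by
  classical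
  obtain ⟨d, hd⟩ : ∃ d, ∀ i ∈ s, ℓ i ≤ m + d :=
    ⟨s.sup ℓ, fun i hi => (le_sup hi).trans (by omega)⟩
  induction d generalizing m s with
  | zero =>
    rcases s.eq_empty_or_nonempty with rfl | ⟨i, hi⟩
    · exact absurd hs (by simp [kraftSum])
    · exact ⟨{i}, by simpa, by simp [kraftSum, le_antisymm (hd i hi) (hm i hi)]⟩
  | succ d ih =>
    by_cases hexact : ∃ i ∈ s, ℓ i = m
    · obtain ⟨i, hi, rfl⟩ := hexact
      exact ⟨{i}, by simpa, by simp [kraftSum]⟩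
    push Not at hexact
    have hm' : ∀ i ∈ s, m + 1 ≤ ℓ i := fun i hi => (hm i hi).lt_of_ne (hexact i hi).symm
    have hd' : ∀ i ∈ s, ℓ i ≤ m + 1 + d := fun i hi => by have := hd i hi; omega
    have hhalf : (1 / 2 : ℝ) ^ m = (1 / 2) ^ (m + 1) + (1 / 2) ^ (m + 1) := by ring
    have hpos : (0 : ℝ) < (1 / 2) ^ (m + 1) := by positivity
    obtain ⟨t₁, ht₁, h₁⟩ := ih hm' (by linarith) hd'
    obtain ⟨t₂, ht₂, h₂⟩ := ih (s := s \ t₁) (fun i hi => hm' i (mem_sdiff.1 hi).1)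
      (by rw [kraftSum, sum_sdiff_eq_sub ht₁, ← kraftSum, ← kraftSum, h₁]; linarith)
      (fun i hi => hd' i (mem_sdiff.1 hi).1)
    refine ⟨t₁ ∪ t₂, union_subset ht₁ (ht₂.trans sdiff_subset), ?_⟩
    rw [kraftSum, sum_union (disjoint_sdiff.mono_right ht₂), ← kraftSum, ← kraftSum, h₁, h₂,
      hhalf]

theorem exists_balanced_split_of_kraftSum_eq_one [DecidableEq ι] (h : kraftSum s ℓ = 1)
    (hℓ : ∀ i ∈ s, ℓ i ≠ 0) :
    ∃ t ⊆ s, 2 * #t ≤ #s ∧ kraftSum t (fun i => ℓ i - 1) = 1 ∧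
      kraftSum (s \ t) (fun i => ℓ i - 1) = 1 := by
  obtain ⟨t, hts, ht⟩ := exists_subset_kraftSum_eq (m := 1)
    (fun i hi => Nat.one_le_iff_ne_zero.2 (hℓ i hi)) (by rw [h]; norm_num)
  have hrest : kraftSum (s \ t) ℓ = 1 / 2 := by
    rw [kraftSum, sum_sdiff_eq_sub hts, ← kraftSum, ← kraftSum, h, ht]; norm_num
  have hpred : ∀ u ⊆ s, kraftSum u ℓ = 1 / 2 → kraftSum u (fun i => ℓ i - 1) = 1 :=
    fun u hu hu' => by rw [kraftSum_sub_one fun i hi => hℓ i (hu hi), hu']; norm_num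
  rcases le_total (2 * #t) #s with hcard | hcard
  · exact ⟨t, hts, hcard, hpred t hts (by simpa using ht), hpred _ sdiff_subset hrest⟩
  · refine ⟨s \ t, sdiff_subset, ?_, hpred _ sdiff_subset hrest, ?_⟩
    · rw [card_sdiff_of_subset hts]; omega
    · rw [Finset.sdiff_sdiff_eq_self hts]; exact hpred t hts (by simpa using ht)

theorem lt_card_of_kraftSum_eq_one [DecidableEq ι] {i : ι} (h : kraftSum s ℓ = 1) (hi : i ∈ s) :
    ℓ i < #s := by
  induction hN : #s using Nat.strong_induction_on generalizing s ℓ i with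
  | _ N ih =>
  subst hN
  by_cases h0 : ∃ j ∈ s, ℓ j = 0
  · obtain ⟨j, hj, hj0⟩ := h0
    obtain rfl := eq_singleton_of_kraftSum_le_one h.le hj hj0
    obtain rfl := mem_singleton.1 hi
    simp [hj0]
  push Not at h0
  obtain ⟨t, hts, hcard, ht, hrest⟩ := exists_balanced_split_of_kraftSum_eq_one h h0
  have hsdiff := card_sdiff_of_subset hts
  have ht₀ := (nonempty_of_kraftSum_eq_one ht).card_pos
  have hrest₀ := (nonempty_of_kraftSum_eq_one hrest).card_pos
  have := h0 i hi
  by_cases hit : i ∈ t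
  · have := ih #t (by omega) ht hit rfl
    omega
  · have := ih #(s \ t) (by omega) hrest (mem_sdiff.2 ⟨hi, hit⟩) rfl
    omega

theorem exists_prefix_code_of_kraftSum_eq_one [DecidableEq ι] (h : kraftSum s ℓ = 1) :
    ∃ w : ι → List Bool, (∀ i ∈ s, (w i).length = ℓ i) ∧
      ((s : Set ι).Pairwise fun i j => ¬ w i <+: w j) ∧
      ∀ i ∈ s, (w i).count true ≤ Nat.log 2 #s := by
  induction hN : #s using Nat.strong_induction_on generalizing s ℓ with
  | _ N ih =>
  subst hN
  by_cases h0 : ∃ j ∈ s, ℓ j = 0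
  · obtain ⟨j, hj, hj0⟩ := h0
    obtain rfl := eq_singleton_of_kraftSum_le_one h.le hj hj0
    exact ⟨fun _ => [], by simpa using hj0.symm, by simp, by simp⟩
  push Not at h0
  obtain ⟨t, hts, hcard, ht, hrest⟩ := exists_balanced_split_of_kraftSum_eq_one h h0
  have hsdiff := card_sdiff_of_subset hts
  have ht₀ := (nonempty_of_kraftSum_eq_one ht).card_pos
  have hrest₀ := (nonempty_of_kraftSum_eq_one hrest).card_pos
  obtain ⟨u, hul, hup, huc⟩ := ih #t (by omega) ht rfl
  obtain ⟨v, hvl, hvp, hvc⟩ := ih #(s \ t) (by omega) hrest rfl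
  refine ⟨fun i => if i ∈ t then true :: u i else false :: v i, fun i hi => ?_, ?_, fun i hi => ?_⟩
  · have := h0 i hi
    dsimp only
    split_ifs with hit
    · simp [hul i hit]; omega
    · simp [hvl i (mem_sdiff.2 ⟨hi, hit⟩)]; omega
  · intro i hi j hj hij
    dsimp only
    split_ifs with hit hjt hjt
    · simpa using hup hit hjt hij
    · simp
    · simp
    · simpa using hvp (mem_sdiff.2 ⟨hi, hit⟩) (mem_sdiff.2 ⟨hj, hjt⟩) hij
  · dsimp only
    split_ifs with hit
    · calc (true :: u i).count true = (u i).count true + 1 := by simp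
        _ ≤ Nat.log 2 #t + 1 := by gcongr; exact huc i hit
        _ = Nat.log 2 (#t * 2) := (Nat.log_mul_base one_lt_two ht₀.ne').symm
        _ ≤ Nat.log 2 #s := Nat.log_mono_right (by omega)
    · calc (false :: v i).count true = (v i).count true := by simp
        _ ≤ Nat.log 2 #(s \ t) := hvc i (mem_sdiff.2 ⟨hi, hit⟩)
        _ ≤ Nat.log 2 #s := Nat.log_mono_right (card_le_card sdiff_subset)

theorem finite_setOf_kraftSum_eq_one [Fintype ι] [DecidableEq ι] :
    {ℓ : ι → ℕ | kraftSum univ ℓ = 1}.Finite :=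
  (Set.Finite.pi fun _ => Set.finite_Iio (Fintype.card ι)).subset
    fun _ h i _ => lt_card_of_kraftSum_eq_one h (mem_univ i)

theorem exists_kraftSum_eq_one [DecidableEq ι] (hs : s.Nonempty) :
    ∃ ℓ : ι → ℕ, kraftSum s ℓ = 1 := by
  obtain ⟨ℓ, -, h⟩ := exists_le_kraftSum_eq_one (ℓ := fun _ => #s) hs (by
    rw [kraftSum, sum_const, nsmul_eq_mul, div_pow, one_pow, mul_one_div,
      div_le_one (by positivity)]
    exact_mod_cast Nat.lt_two_pow_self.le)
  exact ⟨ℓ, h⟩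

theorem exists_optimal_prefix_code_log_ones_general
    (n : ℕ) (hn : 1 ≤ n) (p : Fin n → ℝ)
    (hp : ∀ i, 0 ≤ p i) :
    ∃ w : Fin n → List Bool,
      (∀ i j, i ≠ j → ¬ (w i <+: w j)) ∧
      (∀ v : Fin n → List Bool, (∀ i j, i ≠ j → ¬ (v i <+: v j)) →
        ∑ i, p i * ((w i).length : ℝ) ≤ ∑ i, p i * ((v i).length : ℝ)) ∧
      (∀ i, ((w i).count true : ℝ) ≤ Real.logb 2 n) := by
  have hne : (univ : Finset (Fin n)).Nonempty := univ_nonempty_iff.2 ⟨⟨0, hn⟩⟩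
  obtain ⟨ℓ, hℓ, hmin⟩ := Set.exists_min_image _ (fun ℓ : Fin n → ℕ => ∑ i, p i * (ℓ i : ℝ))
    finite_setOf_kraftSum_eq_one (exists_kraftSum_eq_one hne)
  obtain ⟨w, hlen, hpre, hones⟩ := exists_prefix_code_of_kraftSum_eq_one hℓ
  refine ⟨w, fun i j hij => hpre (mem_univ i) (mem_univ j) hij, fun v hv => ?_, fun i => ?_⟩
  · obtain ⟨ℓ', hle, hℓ'⟩ := exists_le_kraftSum_eq_one hne
      (kraftSum_length_le_one fun i _ j _ hij => hv i j hij)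
    calc ∑ i, p i * ((w i).length : ℝ) = ∑ i, p i * (ℓ i : ℝ) := by simp [hlen]
      _ ≤ ∑ i, p i * (ℓ' i : ℝ) := hmin ℓ' hℓ'
      _ ≤ ∑ i, p i * ((v i).length : ℝ) := by
        gcongr with i
        · exact hp i
        · exact hle i (mem_univ i)
  · calc ((w i).count true : ℝ) ≤ Nat.log 2 n := by
          exact_mod_cast (hones i (mem_univ i)).trans_eq (by simp)
      _ ≤ Real.logb 2 n := by exact_mod_cast Real.natLog_le_logb n 2

/-- **Theorem 3.** Let `p_1 ≤ … ≤ p_n` be a nondecreasing probability distribution on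
`{1,…,n}`, with `n ≥ 1`. Then there exists a prefix code attaining the minimum average
length over ALL prefix codes, in which every codeword contains at most `log₂ n` ones. -/
theorem exists_optimal_prefix_code_log_ones
    (n : ℕ) (hn : 1 ≤ n) (p : Fin n → ℝ)
    (hp : ∀ i, 0 ≤ p i) (hsum : ∑ i, p i = 1) (hmono : Monotone p) :
    ∃ w : Fin n → List Bool,
      (∀ i j, i ≠ j → ¬ (w i <+: w j)) ∧
      (∀ v : Fin n → List Bool, (∀ i j, i ≠ j → ¬ (v i <+: v j)) →
        ∑ i, p i * ((w i).length : ℝ) ≤ ∑ i, p i * ((v i).length : ℝ)) ∧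
      (∀ i, ((w i).count true : ℝ) ≤ Real.logb 2 n) :=
  exists_optimal_prefix_code_log_ones_general n hn p hp
end

section
/- Let n ≥ 2 and let w be a prefix code on {1,…,n} whose codeword lengths ℓ_i = |w(i)| satisfy ℓ_i ≥ 1 for all i, Σ_{i=1}^n 2^{−ℓ_i} = 1, ℓ_1 ≥ ℓ_2 ≥ … ≥ ℓ_n, and whose codewords w(1), …, w(n) are strictly increasing in the lexicographic order on binary strings. Then the number of codewords whose first bit is 0 is at least the number of codewords whose first bit is 1. -/
open scoped BigOperators

private lemma prefix_tricho {α : Type*} {l₁ l₂ l₃ : List α} (h₁ : l₁ <+: l₃) (h₂ : l₂ <+: l₃) :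
    l₁ <+: l₂ ∨ l₂ <+: l₁ := by
  rcases le_total l₁.length l₂.length with h | h
  · left
    have : l₂.take l₁.length = l₁ := by
      rw [List.prefix_iff_eq_take.mp h₂, List.take_take, min_eq_left h,
        ← List.prefix_iff_eq_take.mp h₁]
    rw [← this]; exact List.take_prefix _ _
  · right
    have : l₁.take l₂.length = l₂ := by
      rw [List.prefix_iff_eq_take.mp h₁, List.take_take, min_eq_left h,
        ← List.prefix_iff_eq_take.mp h₂]
    rw [← this]; exact List.take_prefix _ _

private lemma card_ext_set (L : ℕ) (v : List Bool) (hv : v.length ≤ L) :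
    (Finset.univ.filter fun f : Fin L → Bool => v <+: List.ofFn f).card = 2 ^ (L - v.length) := by
  have h2 : (2 : ℕ) ^ (L - v.length) = (Finset.univ : Finset (Fin (L - v.length) → Bool)).card := by
    simp [Finset.card_univ, Fintype.card_fun]
  rw [h2]
  refine Finset.card_bij'
    (fun f _ => fun k : Fin (L - v.length) => f ⟨v.length + (k : ℕ), by omega⟩)
    (fun g _ => fun j : Fin L =>
      if h : (j : ℕ) < v.length then v.get ⟨j, h⟩ else g ⟨(j : ℕ) - v.length, by omega⟩)
    (fun f hf => Finset.mem_univ _) ?_ ?_ ?_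
  · -- j-map lands in the filter
    intro g _
    simp only [Finset.mem_filter, Finset.mem_univ, true_and]
    rw [List.prefix_iff_eq_take]
    apply List.ext_getElem
    · simp [hv]
    · intro k hk hk'
      have hkv : k < v.length := hk
      simp only [List.getElem_take, List.getElem_ofFn]
      simp [hkv]
  · -- left inverse
    intro f hf
    simp only [Finset.mem_filter, Finset.mem_univ, true_and] at hf
    have hf' := List.prefix_iff_eq_take.mp hf
    funext j
    by_cases h : (j : ℕ) < v.length
    · simp only [h, dif_pos]
      have hgoal : v[(j : ℕ)] = (List.ofFn f)[(j : ℕ)]'(by simp) := hf.getElem h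
      simp only [List.get_eq_getElem, hgoal, List.getElem_ofFn]
    · simp only [h, dif_neg, not_false_iff]
      congr 1
      ext
      simp
      omega
  · -- right inverse
    intro g _
    funext k
    have h1 : ¬ ((v.length + (k : ℕ)) < v.length) := by omega
    simp only [h1, dif_neg, not_false_iff]
    congr 1
    ext
    simp
  
private lemma kraft_le {ι : Type*} [DecidableEq ι] (s : Finset ι) (v : ι → List Bool)
    (hpf : ∀ i ∈ s, ∀ j ∈ s, i ≠ j → ¬ v i <+: v j) :
    ∑ i ∈ s, (2 : ℝ) ^ (-((v i).length : ℤ)) ≤ 1 := by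
  set L := s.sup fun i => (v i).length with hL
  have hle : ∀ i ∈ s, (v i).length ≤ L := fun i hi => Finset.le_sup (f := fun i => (v i).length) hi
  set F : ι → Finset (Fin L → Bool) :=
    fun i => Finset.univ.filter fun f => v i <+: List.ofFn f with hF
  have hsum : ∑ i ∈ s, 2 ^ (L - (v i).length) ≤ 2 ^ L := by
    calc ∑ i ∈ s, 2 ^ (L - (v i).length) = ∑ i ∈ s, (F i).card := by
          exact Finset.sum_congr rfl fun i hi => (card_ext_set L (v i) (hle i hi)).symm
      _ = (s.biUnion F).card := by
          refine (Finset.card_biUnion ?_).symm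
          intro i hi j hj hij
          apply Finset.disjoint_left.mpr
          intro f hfi hfj
          simp only [hF, Finset.mem_filter, Finset.mem_univ, true_and] at hfi hfj
          rcases prefix_tricho hfi hfj with h | h
          · exact hpf i hi j hj hij h
          · exact hpf j hj i hi (Ne.symm hij) h
      _ ≤ (Finset.univ : Finset (Fin L → Bool)).card := Finset.card_le_univ _
      _ = 2 ^ L := by simp [Finset.card_univ, Fintype.card_fun]
  have hcast : ∑ i ∈ s, (2 : ℝ) ^ (-((v i).length : ℤ)) =
      ((∑ i ∈ s, 2 ^ (L - (v i).length) : ℕ) : ℝ) / 2 ^ L := by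
    push_cast
    rw [Finset.sum_div]
    refine Finset.sum_congr rfl fun i hi => ?_
    have h1 : (2 : ℝ) ^ (L - (v i).length) * 2 ^ (v i).length = 2 ^ L := by
      rw [← pow_add, Nat.sub_add_cancel (hle i hi)]
    rw [zpow_neg, zpow_natCast, eq_div_iff (by positivity)]
    field_simp
    linarith [h1]
  rw [hcast, div_le_one (by positivity)]
  exact_mod_cast hsum

/-- **Balance of a full alphabetic code with nonincreasing lengths.** Let `n ≥ 2` and let
`w` be a prefix code on `{1,…,n}` with codeword lengths `ℓ_i = |w i| ≥ 1` satisfying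
`∑ 2^{-ℓ_i} = 1` (fullness), `ℓ_1 ≥ ℓ_2 ≥ … ≥ ℓ_n`, and whose codewords are strictly
increasing in the lexicographic order on binary strings. Then the number of codewords
beginning with `0` is at least the number of codewords beginning with `1`. -/
theorem left_subtree_at_least_right
    (n : ℕ) (hn : 2 ≤ n) (w : Fin n → List Bool)
    (hne : ∀ i, w i ≠ [])
    (hpf : ∀ i j, i ≠ j → ¬ (w i <+: w j))
    (hkraft : ∑ i : Fin n, (2 : ℝ) ^ (-((w i).length : ℤ)) = 1)
    (hanti : ∀ i j : Fin n, i ≤ j → (w j).length ≤ (w i).length)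
    (hlex : ∀ i j : Fin n, i < j → List.Lex (· < ·) (w i) (w j)) :
    (Finset.univ.filter fun i : Fin n => (w i).head? = some true).card ≤
      (Finset.univ.filter fun i : Fin n => (w i).head? = some false).card := by
  classical
  -- decompose each word as head :: tail
  have hdec : ∀ i : Fin n, w i = (w i).headI :: (w i).tail := by
    intro i
    obtain ⟨b, t, h⟩ := List.exists_cons_of_ne_nil (hne i)
    rw [h]; rfl
  have hhead : ∀ i : Fin n, (w i).head? = some (w i).headI := by
    intro i
    conv_lhs => rw [hdec i]
    rfl
  set A := Finset.univ.filter fun i : Fin n => (w i).head? = some false with hA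
  set B := Finset.univ.filter fun i : Fin n => (w i).head? = some true with hB
  -- B is the complement filter of A
  have hBA : B = Finset.univ.filter fun i : Fin n => ¬ ((w i).head? = some false) := by
    ext i
    simp only [hB, Finset.mem_filter, Finset.mem_univ, true_and, hhead i, Option.some_inj]
    cases h : (w i).headI <;> simp
  -- members of A precede members of B
  have hAB : ∀ i ∈ A, ∀ j ∈ B, i < j := by
    intro i hi j hj
    simp only [hA, Finset.mem_filter, Finset.mem_univ, true_and] at hi
    simp only [hB, Finset.mem_filter, Finset.mem_univ, true_and] at hj
    by_contra hc
    push_neg at hc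
    have hne' : j ≠ i := by
      intro h; rw [h] at hj; rw [hi] at hj; exact (by simp at hj)
    have hji : j < i := lt_of_le_of_ne hc hne'
    have hl := hlex j i hji
    have hwi : w i = false :: (w i).tail := by
      conv_lhs => rw [hdec i]
      rw [show (w i).headI = false by
        have := hhead i; rw [hi] at this; exact (Option.some_inj.mp this.symm)]
    have hwj : w j = true :: (w j).tail := by
      conv_lhs => rw [hdec j]
      rw [show (w j).headI = true by
        have := hhead j; rw [hj] at this; exact (Option.some_inj.mp this.symm)]
    rw [hwi, hwj] at hl
    cases hl with
    | rel h => exact absurd h (by decide)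
  -- Kraft for the two subtrees
  have kraftA : ∑ i ∈ A, (2 : ℝ) ^ (-(((w i).tail).length : ℤ)) ≤ 1 := by
    apply kraft_le
    intro i hi j hj hij hpre
    simp only [hA, Finset.mem_filter, Finset.mem_univ, true_and] at hi hj
    apply hpf i j hij
    have hwi : w i = false :: (w i).tail := by
      conv_lhs => rw [hdec i]
      rw [show (w i).headI = false from Option.some_inj.mp ((hhead i).symm.trans hi)]
    have hwj : w j = false :: (w j).tail := by
      conv_lhs => rw [hdec j]
      rw [show (w j).headI = false from Option.some_inj.mp ((hhead j).symm.trans hj)]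
    rw [hwi, hwj, List.cons_prefix_cons]
    exact ⟨rfl, hpre⟩
  have kraftB : ∑ i ∈ B, (2 : ℝ) ^ (-(((w i).tail).length : ℤ)) ≤ 1 := by
    apply kraft_le
    intro i hi j hj hij hpre
    simp only [hB, Finset.mem_filter, Finset.mem_univ, true_and] at hi hj
    apply hpf i j hij
    have hwi : w i = true :: (w i).tail := by
      conv_lhs => rw [hdec i]
      rw [show (w i).headI = true from Option.some_inj.mp ((hhead i).symm.trans hi)]
    have hwj : w j = true :: (w j).tail := by
      conv_lhs => rw [hdec j]
      rw [show (w j).headI = true from Option.some_inj.mp ((hhead j).symm.trans hj)]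
    rw [hwi, hwj, List.cons_prefix_cons]
    exact ⟨rfl, hpre⟩
  -- relate tail weights to full weights : 2^{-(ℓ-1)} = 2 * 2^{-ℓ}
  have htail : ∀ i : Fin n, (2 : ℝ) ^ (-(((w i).tail).length : ℤ)) =
      2 * (2 : ℝ) ^ (-((w i).length : ℤ)) := by
    intro i
    have hlen : (w i).length = (w i).tail.length + 1 := by
      conv_lhs => rw [hdec i]
      simp
    rw [hlen]
    push_cast
    rw [neg_add, zpow_add₀ (by norm_num : (2:ℝ) ≠ 0)]
    norm_num
    ring
  set S := ∑ i ∈ A, (2 : ℝ) ^ (-((w i).length : ℤ)) with hS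
  set T := ∑ i ∈ B, (2 : ℝ) ^ (-((w i).length : ℤ)) with hT
  have hST : S + T = 1 := by
    rw [hS, hT, hA, hBA, Finset.sum_filter_add_sum_filter_not]
    exact hkraft
  have hS2 : 2 * S ≤ 1 := by
    calc 2 * S = ∑ i ∈ A, (2 : ℝ) ^ (-(((w i).tail).length : ℤ)) := by
          rw [hS, Finset.mul_sum]
          exact Finset.sum_congr rfl fun i _ => (htail i).symm
      _ ≤ 1 := kraftA
  have hT2 : 2 * T ≤ 1 := by
    calc 2 * T = ∑ i ∈ B, (2 : ℝ) ^ (-(((w i).tail).length : ℤ)) := by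
          rw [hT, Finset.mul_sum]
          exact Finset.sum_congr rfl fun i _ => (htail i).symm
      _ ≤ 1 := kraftB
  have hSeqT : S = T := by linarith
  -- now compare cardinalities
  rcases B.eq_empty_or_nonempty with hBe | hBne
  · simp [← hB, hBe]
  obtain ⟨j0, hj0B, hj0max⟩ := Finset.exists_max_image B (fun j => (w j).length) hBne
  set c : ℝ := (2 : ℝ) ^ (-((w j0).length : ℤ)) with hc
  have hcpos : 0 < c := by positivity
  have h1 : (B.card : ℝ) * c ≤ T := by
    rw [hT]
    have := Finset.card_nsmul_le_sum B (fun i => (2 : ℝ) ^ (-((w i).length : ℤ))) c ?_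
    · simp only [nsmul_eq_mul] at this; exact this
    · intro j hj
      apply zpow_le_zpow_right₀ (by norm_num : (1:ℝ) ≤ 2)
      have := hj0max j hj
      omega
  have h2 : S ≤ (A.card : ℝ) * c := by
    rw [hS]
    have := Finset.sum_le_card_nsmul A (fun i => (2 : ℝ) ^ (-((w i).length : ℤ))) c ?_
    · simp only [nsmul_eq_mul] at this; exact this
    · intro i hi
      apply zpow_le_zpow_right₀ (by norm_num : (1:ℝ) ≤ 2)
      have hij : i < j0 := hAB i hi j0 hj0B
      have := hanti i j0 (le_of_lt hij)
      omega
  have : (B.card : ℝ) * c ≤ (A.card : ℝ) * c := by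
    calc (B.card : ℝ) * c ≤ T := h1
      _ = S := hSeqT.symm
      _ ≤ (A.card : ℝ) * c := h2
  have hfin : (B.card : ℝ) ≤ (A.card : ℝ) := le_of_mul_le_mul_right this hcpos
  exact_mod_cast hfin
end
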